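/- arXiv:1410.2772 — 5 statements merged into one kernel-verified Lean document; each statement's English description precedes it below -/
import Mathlib

section
/- Let (W, S) be the universal Coxeter system of rank n ≥ 1 with simple generators t_1, …, t_n and Coxeter length ℓ, let π be an involution of {1,…,n} fixing exactly f points, and let * be the automorphism of W determined by t_i* = t_{π(i)}; set I_* = {w ∈ W : w⁻¹ = w*}. Then: (1) for every k ≥ 1, the set {w ∈ W : ℓ(w) = k} is finite of cardinality n(n−1)^{k−1}; (2) for every k ≥ 1, the set {w ∈ W : w* = w and ℓ(w) = k} is finite of cardinality f·(f−1)^{k−1} (interpreted as 0 when f = 0); (3) for every k ≥ 0, the set {w ∈ I_* : ℓ(w) = 2k+1} is finite of cardinality f·(n−1)^k; (4) for every k ≥ 1, the set {w ∈ I_* : ℓ(w) = 2k} is finite of cardinality (n−f)·(n−1)^{k−1}. (These counts encode the formulas P_{U_n}(q) = (1+q)/(1−(n−1)q), F_{U_n,*}(q) = (1+q)/(1−(f−1)q), and L_{U_n,*}(q) = ((1+q²)/(1+q))·(1−(f−1)q)/(1−(n−1)q²).) -/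
/-!
Cancelling a letter against an equal first letter, and prepending it otherwise, is an involution
on the words with no two equal adjacent letters. These involutions satisfy the only relations of
the universal Coxeter group, so `W` acts on such words, and the orbit map of the empty word is a
bijection onto them which turns `ℓ` into word length, `*` into applying `π` letterwise and
inversion into reversal. So `w* = w` means that every letter of the normal form is fixed by `π`,
and `w⁻¹ = w*` means that the normal form `l` satisfies `l.reverse = l.map π`. Such an `l` of
length `m + 2 ≥ 3` is `a :: u ++ [π a]` with `u` of the same kind and `a` different from the
first letter of `u`; this gives a factor `n - 1` for every two letters on top of the words `[a]`
with `π a = a` and `[a, π a]` with `π a ≠ a`.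
-/

/-- The universal Coxeter matrix of rank `n`: diagonal entries `1`, off-diagonal entries `∞`
(encoded by `0`), so the product of any two distinct simple generators has infinite order. -/
def univMat (n : ℕ) : CoxeterMatrix (Fin n) where
  M := Matrix.of fun i j => if i = j then 1 else 0
  isSymm := by
    unfold Matrix.IsSymm
    ext i j
    simp [Matrix.transpose_apply, eq_comm]
  diagonal := by simp
  off_diagonal := by
    intro i j h
    simp [h]

theorem CoxeterSystem.map_wordProd {B W : Type*} [Group W] {M : CoxeterMatrix B}
    (cs : CoxeterSystem M W) {F : Type*} [FunLike F W W] [MonoidHomClass F W W] (φ : F)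
    (π : B → B) (hφ : ∀ i, φ (cs.simple i) = cs.simple (π i)) (l : List B) :
    φ (cs.wordProd l) = cs.wordProd (l.map π) := by
  simp [CoxeterSystem.wordProd, map_list_prod, Function.comp_def, hφ]

abbrev NormalWord (α : Type*) := {l : List α // l.IsChain (· ≠ ·)}

namespace NormalWord

variable {α : Type*} [DecidableEq α]

def mulLetter (i : α) (x : NormalWord α) : NormalWord α :=
  if h : x.1.head? = some i then ⟨x.1.tail, x.2.tail⟩
  else ⟨i :: x.1, List.isChain_cons.2 ⟨fun _ hy e => h (e ▸ hy), x.2⟩⟩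

theorem mulLetter_of_head?_ne {i : α} {x : NormalWord α} (h : x.1.head? ≠ some i) :
    (mulLetter i x).1 = i :: x.1 := by
  simp [mulLetter, h]

theorem mulLetter_of_head?_eq {i : α} {x : NormalWord α} (h : x.1.head? = some i) :
    (mulLetter i x).1 = x.1.tail := by
  simp [mulLetter, h]

theorem mulLetter_involutive (i : α) : Function.Involutive (mulLetter i) := by
  intro x
  by_cases h : x.1.head? = some i
  · have hx : i :: x.1.tail = x.1 := List.cons_head?_tail h
    have htail : x.1.tail.head? ≠ some i := fun h' =>
      (List.isChain_cons.1 (hx ▸ x.2 : (i :: x.1.tail).IsChain (· ≠ ·))).1 i h' rfl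
    have h' : (mulLetter i x).1.head? ≠ some i := by rwa [mulLetter_of_head?_eq h]
    exact Subtype.ext (by rw [mulLetter_of_head?_ne h', mulLetter_of_head?_eq h, hx])
  · have h' : (mulLetter i x).1.head? = some i := by simp [mulLetter_of_head?_ne h]
    exact Subtype.ext (by rw [mulLetter_of_head?_eq h', mulLetter_of_head?_ne h, List.tail_cons])

theorem length_mulLetter_le (i : α) (x : NormalWord α) :
    (mulLetter i x).1.length ≤ x.1.length + 1 := by
  by_cases h : x.1.head? = some i
  · rw [mulLetter_of_head?_eq h, List.length_tail]; omega
  · rw [mulLetter_of_head?_ne h, List.length_cons]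

def mulLetterPerm (i : α) : Equiv.Perm (NormalWord α) := (mulLetter_involutive i).toPerm

@[simp]
theorem mulLetterPerm_apply (i : α) (x : NormalWord α) : mulLetterPerm i x = mulLetter i x := rfl

end NormalWord

namespace UniversalCoxeter

open NormalWord

variable {n : ℕ}

theorem isLiftable_mulLetterPerm : (univMat n).IsLiftable (mulLetterPerm (α := Fin n)) := by
  intro i j
  by_cases h : i = j
  · subst h
    simp only [univMat, Matrix.of_apply, if_true, pow_one]
    exact Equiv.ext (mulLetter_involutive i)
  · simp [univMat, h]

noncomputable def normalWordAction : (univMat n).Group →* Equiv.Perm (NormalWord (Fin n)) :=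
  (univMat n).toCoxeterSystem.lift ⟨mulLetterPerm, isLiftable_mulLetterPerm⟩

theorem normalWordAction_simple (i : Fin n) :
    normalWordAction ((univMat n).toCoxeterSystem.simple i) = mulLetterPerm i :=
  (univMat n).toCoxeterSystem.lift_apply_simple isLiftable_mulLetterPerm i

theorem wordProd_normalWordAction (w : (univMat n).Group) (x : NormalWord (Fin n)) :
    (univMat n).toCoxeterSystem.wordProd (normalWordAction w x).1 =
      w * (univMat n).toCoxeterSystem.wordProd x.1 := by
  set cs := (univMat n).toCoxeterSystem
  obtain ⟨l, rfl⟩ := cs.wordProd_surjective w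
  induction l generalizing x with
  | nil => simp
  | cons i l ih =>
    rw [cs.wordProd_cons, map_mul, Equiv.Perm.mul_apply, normalWordAction_simple, mul_assoc, ← ih]
    by_cases h : (normalWordAction (cs.wordProd l) x).1.head? = some i
    · conv_rhs => rw [← List.cons_head?_tail h]
      rw [mulLetterPerm_apply, mulLetter_of_head?_eq h, cs.wordProd_cons,
        cs.simple_mul_simple_cancel_left]
    · rw [mulLetterPerm_apply, mulLetter_of_head?_ne h, cs.wordProd_cons]

theorem length_normalWordAction_le (w : (univMat n).Group) (x : NormalWord (Fin n)) :
    (normalWordAction w x).1.length ≤ (univMat n).toCoxeterSystem.length w + x.1.length := by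
  set cs := (univMat n).toCoxeterSystem
  obtain ⟨l, hl, rfl⟩ := cs.exists_isReduced w
  rw [hl.eq]
  clear hl
  induction l generalizing x with
  | nil => simp
  | cons i l ih =>
    rw [cs.wordProd_cons, map_mul, Equiv.Perm.mul_apply, normalWordAction_simple,
      mulLetterPerm_apply, List.length_cons]
    have := length_mulLetter_le i (normalWordAction (cs.wordProd l) x)
    have := ih x
    omega

theorem normalWordAction_wordProd_nil (l : NormalWord (Fin n)) :
    normalWordAction ((univMat n).toCoxeterSystem.wordProd l.1) ⟨[], .nil⟩ = l := by
  obtain ⟨l, hl⟩ := l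
  induction l with
  | nil => simp
  | cons i l ih =>
    obtain ⟨hi, hl⟩ := List.isChain_cons.1 hl
    apply Subtype.ext
    rw [(univMat n).toCoxeterSystem.wordProd_cons, map_mul, Equiv.Perm.mul_apply,
      normalWordAction_simple, ih hl, mulLetterPerm_apply,
      mulLetter_of_head?_ne fun h => hi i h rfl]

noncomputable def normalForm : (univMat n).Group ≃ NormalWord (Fin n) where
  toFun w := normalWordAction w ⟨[], .nil⟩
  invFun x := (univMat n).toCoxeterSystem.wordProd x.1
  left_inv w := by simpa using wordProd_normalWordAction w ⟨[], .nil⟩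
  right_inv := normalWordAction_wordProd_nil

theorem normalForm_wordProd (x : NormalWord (Fin n)) :
    normalForm ((univMat n).toCoxeterSystem.wordProd x.1) = x :=
  normalForm.apply_symm_apply x

theorem wordProd_normalForm (w : (univMat n).Group) :
    (univMat n).toCoxeterSystem.wordProd (normalForm w).1 = w :=
  normalForm.symm_apply_apply w

theorem length_eq_length_normalForm (w : (univMat n).Group) :
    (univMat n).toCoxeterSystem.length w = (normalForm w).1.length := by
  refine le_antisymm ?_ (length_normalWordAction_le w ⟨[], .nil⟩)
  conv_lhs => rw [← wordProd_normalForm w]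
  exact (univMat n).toCoxeterSystem.length_wordProd_le _

theorem normalForm_inv (w : (univMat n).Group) :
    (normalForm w⁻¹).1 = (normalForm w).1.reverse := by
  have hrev : (normalForm w).1.reverse.IsChain (· ≠ ·) :=
    List.isChain_reverse.2 ((normalForm w).2.imp fun _ _ h => h.symm)
  have := congrArg Subtype.val (normalForm_wordProd ⟨_, hrev⟩)
  rwa [CoxeterSystem.wordProd_reverse, wordProd_normalForm] at this

section Automorphism

variable {π : Equiv.Perm (Fin n)} {F : Type*} [FunLike F (univMat n).Group (univMat n).Group]
  [MonoidHomClass F (univMat n).Group (univMat n).Group] {φ : F}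

theorem normalForm_map (hφ : ∀ i, φ ((univMat n).simple i) = (univMat n).simple (π i))
    (w : (univMat n).Group) : (normalForm (φ w)).1 = (normalForm w).1.map π := by
  have hmap : ((normalForm w).1.map π).IsChain (· ≠ ·) :=
    (List.isChain_map π).2 ((normalForm w).2.imp fun _ _ h e => h (π.injective e))
  have := congrArg Subtype.val (normalForm_wordProd ⟨_, hmap⟩)
  rwa [← CoxeterSystem.map_wordProd _ φ π (by simpa using hφ), wordProd_normalForm] at this

theorem map_eq_self_iff (hφ : ∀ i, φ ((univMat n).simple i) = (univMat n).simple (π i))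
    (w : (univMat n).Group) : φ w = w ↔ ∀ i ∈ (normalForm w).1, π i = i := by
  rw [← normalForm.injective.eq_iff, Subtype.ext_iff, normalForm_map hφ, ← List.map_eq_map_iff,
    List.map_id']

theorem inv_eq_map_iff (hφ : ∀ i, φ ((univMat n).simple i) = (univMat n).simple (π i))
    (w : (univMat n).Group) :
    w⁻¹ = φ w ↔ (normalForm w).1.reverse = (normalForm w).1.map π := by
  rw [← normalForm.injective.eq_iff, Subtype.ext_iff, normalForm_map hφ, normalForm_inv]

end Automorphism

theorem card_subtype_eq_card_isChain {P : (univMat n).Group → Prop} {Q : List (Fin n) → Prop}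
    (h : ∀ w, P w ↔ Q (normalForm w).1) :
    Nat.card {w // P w} = Nat.card {l : List (Fin n) // l.IsChain (· ≠ ·) ∧ Q l} :=
  Nat.card_congr ((normalForm.subtypeEquiv h).trans (Equiv.subtypeSubtypeEquivSubtypeInter _ Q))

end UniversalCoxeter

section Counting

open Finset

variable {α : Type*}

theorem Nat.card_subtype_prod_of_card_fiber {β γ : Type*} [Finite β] [Finite γ]
    (p : β → γ → Prop) {c : ℕ} (h : ∀ b, Nat.card {x // p b x} = c) :
    Nat.card {x : β × γ // p x.1 x.2} = Nat.card β * c := by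
  have := Fintype.ofFinite β
  rw [Nat.card_congr (Equiv.subtypeProdEquivSigmaSubtype p), Nat.card_sigma]
  simp [h, Nat.card_eq_fintype_card]

theorem List.finite_subtype_of_length_eq [Finite α] {p : List α → Prop} (k : ℕ)
    (h : ∀ l, p l → l.length = k) : Finite {l // p l} :=
  ((List.finite_length_eq α k).subset h).to_subtype

theorem card_mem_and_cons_isChain_ne [DecidableEq α] (s : Finset α) {l : List α}
    (hl : l.IsChain (· ≠ ·)) {b : α} (hb : l.head? = some b) (hbs : b ∈ s) :
    Nat.card {a // a ∈ s ∧ (a :: l).IsChain (· ≠ ·)} = #s - 1 := by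
  rw [← Finset.card_erase_of_mem hbs, ← Nat.card_eq_finsetCard]
  refine Nat.card_congr (Equiv.subtypeEquivRight fun a => ?_)
  simp [List.isChain_cons, hb, hl, and_comm]

abbrev NormalWordsIn (s : Finset α) (k : ℕ) : Type _ :=
  {l : List α // l.IsChain (· ≠ ·) ∧ (∀ a ∈ l, a ∈ s) ∧ l.length = k}

instance [Finite α] (s : Finset α) (k : ℕ) : Finite (NormalWordsIn s k) :=
  List.finite_subtype_of_length_eq k fun _ hl => hl.2.2

theorem card_normalWordsIn [Fintype α] [DecidableEq α] (s : Finset α) (k : ℕ) :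
    Nat.card (NormalWordsIn s (k + 1)) = #s * (#s - 1) ^ k := by
  induction k with
  | zero =>
    rw [← Nat.card_eq_finsetCard, zero_add, pow_zero, mul_one]
    refine (Nat.card_eq_of_bijective (fun a : s => ⟨[a.1], by simp⟩) ⟨?_, ?_⟩).symm
    · intro a b h
      exact Subtype.ext (List.cons.inj (congrArg Subtype.val h)).1
    · rintro ⟨l, -, hs, hl⟩
      obtain ⟨a, rfl⟩ := List.length_eq_one_iff.1 hl
      exact ⟨⟨a, by simpa using hs⟩, rfl⟩
  | succ k ih =>
    let cons :
        {x : NormalWordsIn s (k + 1) × α // x.2 ∈ s ∧ (x.2 :: x.1.1).IsChain (· ≠ ·)} →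
          NormalWordsIn s (k + 1 + 1) := fun x =>
      ⟨x.1.2 :: x.1.1.1, x.2.2, by simpa using ⟨x.2.1, x.1.1.2.2.1⟩, by simp [x.1.1.2.2.2]⟩
    rw [← Nat.card_eq_of_bijective cons ⟨?_, ?_⟩]
    · rw [Nat.card_subtype_prod_of_card_fiber
        (fun (l : NormalWordsIn s (k + 1)) a => a ∈ s ∧ (a :: l.1).IsChain (· ≠ ·))
        (c := #s - 1), ih, pow_succ, mul_assoc]
      rintro ⟨l, hl, hs, hlen⟩
      obtain ⟨b, t, rfl⟩ := List.exists_cons_of_length_eq_add_one hlen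
      exact card_mem_and_cons_isChain_ne s hl rfl (hs b List.mem_cons_self)
    · rintro ⟨⟨⟨l, _⟩, a⟩, _⟩ ⟨⟨⟨l', _⟩, a'⟩, _⟩ h
      obtain ⟨rfl, rfl⟩ := List.cons.inj (congrArg Subtype.val h)
      rfl
    · rintro ⟨l, hl, hs, hlen⟩
      obtain ⟨a, t, rfl⟩ := List.exists_cons_of_length_eq_add_one hlen
      have hs' : ∀ b ∈ t, b ∈ s := fun b hb => hs b (List.mem_cons_of_mem a hb)
      exact ⟨⟨(⟨t, hl.tail, hs', by simpa using hlen⟩, a), hs a List.mem_cons_self, hl⟩,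
        rfl⟩

end Counting

section Twisted

variable {α : Type*} {π : Equiv.Perm α}

abbrev TwistedNormalWords (π : Equiv.Perm α) (m : ℕ) : Type _ :=
  {l : List α // l.IsChain (· ≠ ·) ∧ l.reverse = l.map π ∧ l.length = m}

instance [Finite α] (π : Equiv.Perm α) (m : ℕ) : Finite (TwistedNormalWords π m) :=
  List.finite_subtype_of_length_eq m fun _ hl => hl.2.2

theorem card_twistedNormalWords_one :
    Nat.card (TwistedNormalWords π 1) = Nat.card {a // π a = a} := by
  refine (Nat.card_eq_of_bijective (fun a => ⟨[a.1], by simp [a.2]⟩) ⟨?_, ?_⟩).symm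
  · intro a b h
    exact Subtype.ext (List.cons.inj (congrArg Subtype.val h)).1
  · rintro ⟨l, -, hπl, hl⟩
    obtain ⟨a, rfl⟩ := List.length_eq_one_iff.1 hl
    exact ⟨⟨a, by simpa [eq_comm] using hπl⟩, rfl⟩

theorem card_twistedNormalWords_two (hπ : Function.Involutive π) :
    Nat.card (TwistedNormalWords π 2) = Nat.card {a // π a ≠ a} := by
  refine (Nat.card_eq_of_bijective
    (fun a => ⟨[a.1, π a.1], by simpa [hπ a.1] using Ne.symm a.2⟩) ⟨?_, ?_⟩).symm
  · intro a b h
    exact Subtype.ext (List.cons.inj (congrArg Subtype.val h)).1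
  · rintro ⟨l, hl, hπl, hlen⟩
    obtain ⟨a, b, rfl⟩ := List.length_eq_two.1 hlen
    obtain ⟨rfl, -⟩ : b = π a ∧ a = π b := by simpa using hπl
    exact ⟨⟨a, by simpa [eq_comm] using hl⟩, rfl⟩

theorem isChain_cons_append_singleton_map {u : List α} {a : α} (hu : u ≠ [])
    (hπu : u.reverse = u.map π) (h : (a :: u).IsChain (· ≠ ·)) :
    (a :: (u ++ [π a])).IsChain (· ≠ ·) := by
  obtain ⟨b, v, rfl⟩ := List.exists_cons_of_ne_nil hu
  have hlast : (a :: b :: v).getLast? = some (π b) := by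
    rw [List.getLast?_cons_cons, ← List.head?_reverse, hπu, List.map_cons, List.head?_cons]
  rw [← List.cons_append, List.isChain_append]
  refine ⟨h, .singleton _, fun x hx y hy => ?_⟩
  rw [hlast, Option.mem_some_iff] at hx
  rw [List.head?_cons, Option.mem_some_iff] at hy
  subst hx hy
  exact fun e => (List.isChain_cons_cons.1 h).1 (π.injective e).symm

theorem card_twistedNormalWords_add_two [Fintype α] [DecidableEq α]
    (hπ : Function.Involutive π) {m : ℕ} (hm : m ≠ 0) :
    Nat.card (TwistedNormalWords π (m + 2)) =
      Nat.card (TwistedNormalWords π m) * (Fintype.card α - 1) := by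
  obtain ⟨m, rfl⟩ := Nat.exists_eq_add_one_of_ne_zero hm
  let wrap : {x : TwistedNormalWords π (m + 1) × α // (x.2 :: x.1.1).IsChain (· ≠ ·)} →
      TwistedNormalWords π (m + 3) := fun x =>
    ⟨x.1.2 :: (x.1.1.1 ++ [π x.1.2]),
      isChain_cons_append_singleton_map (List.ne_nil_of_length_eq_add_one x.1.1.2.2.2)
        x.1.1.2.2.1 x.2,
      by simp [hπ x.1.2, x.1.1.2.2.1], by simp [x.1.1.2.2.2]⟩
  rw [← Nat.card_eq_of_bijective wrap ⟨?_, ?_⟩]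
  · refine Nat.card_subtype_prod_of_card_fiber
      (fun (u : TwistedNormalWords π (m + 1)) a => (a :: u.1).IsChain (· ≠ ·)) ?_
    rintro ⟨u, hu, -, hlen⟩
    obtain ⟨b, t, rfl⟩ := List.exists_cons_of_length_eq_add_one hlen
    simpa using card_mem_and_cons_isChain_ne Finset.univ hu rfl (Finset.mem_univ b)
  · rintro ⟨⟨⟨u, _⟩, a⟩, _⟩ ⟨⟨⟨u', _⟩, a'⟩, _⟩ h
    obtain ⟨rfl, h⟩ := List.cons.inj (congrArg Subtype.val h)
    obtain rfl := List.append_cancel_right h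
    rfl
  · rintro ⟨l, hl, hπl, hlen⟩
    obtain ⟨a, v, rfl⟩ := List.exists_cons_of_length_eq_add_one hlen
    obtain ⟨u, b, rfl⟩ := (List.eq_nil_or_concat' v).resolve_left (by rintro rfl; simp at hlen)
    obtain ⟨rfl, hπu⟩ : b = π a ∧ u.reverse ++ [a] = u.map π ++ [π b] := by
      simpa using hπl
    refine ⟨⟨(⟨u, ?_, (List.append_inj' hπu rfl).1, by simpa using hlen⟩, a), ?_⟩, rfl⟩
    · exact hl.tail.left_of_append
    · exact (List.cons_append ▸ hl : ((a :: u) ++ [π a]).IsChain (· ≠ ·)).left_of_append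

theorem card_twistedNormalWords_odd [Fintype α] [DecidableEq α] (hπ : Function.Involutive π)
    (k : ℕ) : Nat.card (TwistedNormalWords π (2 * k + 1)) =
      Nat.card {a // π a = a} * (Fintype.card α - 1) ^ k := by
  induction k with
  | zero => rw [mul_zero, zero_add, pow_zero, mul_one, card_twistedNormalWords_one]
  | succ k ih =>
    rw [show 2 * (k + 1) + 1 = 2 * k + 1 + 2 by ring,
      card_twistedNormalWords_add_two hπ (by omega), ih, pow_succ, mul_assoc]

theorem card_twistedNormalWords_even [Fintype α] [DecidableEq α] (hπ : Function.Involutive π)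
    (k : ℕ) : Nat.card (TwistedNormalWords π (2 * k + 2)) =
      Nat.card {a // π a ≠ a} * (Fintype.card α - 1) ^ k := by
  induction k with
  | zero => rw [mul_zero, zero_add, pow_zero, mul_one, card_twistedNormalWords_two hπ]
  | succ k ih =>
    rw [show 2 * (k + 1) + 2 = 2 * k + 2 + 2 by ring,
      card_twistedNormalWords_add_two hπ (by omega), ih, pow_succ, mul_assoc]

end Twisted

open UniversalCoxeter in
theorem statement8_general (n : ℕ) (π : Equiv.Perm (Fin n)) (hπ : π * π = 1)
    (f : ℕ) (hf : f = (Finset.univ.filter fun i => π i = i).card)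
    (φ : (univMat n).Group ≃* (univMat n).Group)
    (hφ : ∀ i, φ ((univMat n).simple i) = (univMat n).simple (π i)) :
    (∀ k : ℕ, 1 ≤ k →
        Nat.card {w : (univMat n).Group // (univMat n).toCoxeterSystem.length w = k} =
          n * (n - 1) ^ (k - 1)) ∧
    (∀ k : ℕ, 1 ≤ k →
        Nat.card {w : (univMat n).Group //
            φ w = w ∧ (univMat n).toCoxeterSystem.length w = k} =
          f * (f - 1) ^ (k - 1)) ∧
    (∀ k : ℕ,
        Nat.card {w : (univMat n).Group //
            w⁻¹ = φ w ∧ (univMat n).toCoxeterSystem.length w = 2 * k + 1} =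
          f * (n - 1) ^ k) ∧
    (∀ k : ℕ, 1 ≤ k →
        Nat.card {w : (univMat n).Group //
            w⁻¹ = φ w ∧ (univMat n).toCoxeterSystem.length w = 2 * k} =
          (n - f) * (n - 1) ^ (k - 1)) := by
  have hπ' : Function.Involutive π := fun i => by simpa using DFunLike.congr_fun hπ i
  have hfix : Nat.card {i // π i = i} = f := by
    rw [hf, Nat.card_eq_fintype_card, Fintype.card_subtype]
  have hmoved : Nat.card {i // π i ≠ i} = n - f := by
    rw [Nat.card_eq_fintype_card, Fintype.card_subtype_compl, Fintype.card_fin,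
      ← Nat.card_eq_fintype_card, hfix]
  refine ⟨fun k hk => ?_, fun k hk => ?_, fun k => ?_, fun k hk => ?_⟩
  · obtain ⟨k, rfl⟩ := Nat.exists_eq_add_of_le' hk
    rw [card_subtype_eq_card_isChain
      (Q := fun l => (∀ i ∈ l, i ∈ Finset.univ) ∧ l.length = k + 1)
      (by simp [length_eq_length_normalForm]), card_normalWordsIn]
    simp
  · obtain ⟨k, rfl⟩ := Nat.exists_eq_add_of_le' hk
    rw [card_subtype_eq_card_isChain
      (Q := fun l => (∀ i ∈ l, i ∈ Finset.univ.filter fun i => π i = i) ∧ l.length = k + 1)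
      (by simp [map_eq_self_iff hφ, length_eq_length_normalForm]), card_normalWordsIn, ← hf]
    simp
  · rw [card_subtype_eq_card_isChain (Q := fun l => l.reverse = l.map π ∧ l.length = 2 * k + 1)
      (by simp [inv_eq_map_iff hφ, length_eq_length_normalForm]),
      card_twistedNormalWords_odd hπ', hfix, Fintype.card_fin]
  · obtain ⟨k, rfl⟩ := Nat.exists_eq_add_of_le' hk
    rw [card_subtype_eq_card_isChain (Q := fun l => l.reverse = l.map π ∧ l.length = 2 * k + 2)
      (by simp [inv_eq_map_iff hφ, length_eq_length_normalForm, mul_add]),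
      card_twistedNormalWords_even hπ', hmoved, Fintype.card_fin, Nat.add_sub_cancel]

/-- Let `(W, S)` be the universal Coxeter system of rank `n ≥ 1` with simple
generators `t_1, …, t_n` and length `ℓ`, let `π` be an involution of `{1,…,n}` with exactly `f`
fixed points, and let `*` (here `φ`) be the automorphism of `W` with `t_i* = t_{π i}`; let
`I_* = {w : w⁻¹ = w*}`. Then: (1) `#{w : ℓ w = k} = n(n−1)^{k−1}` for `k ≥ 1`;
(2) `#{w : w* = w, ℓ w = k} = f(f−1)^{k−1}` for `k ≥ 1` (which is `0` when `f = 0`);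
(3) `#{w ∈ I_* : ℓ w = 2k+1} = f(n−1)^k` for `k ≥ 0`;
(4) `#{w ∈ I_* : ℓ w = 2k} = (n−f)(n−1)^{k−1}` for `k ≥ 1`.
(These counts encode the formulas for `P_{U_n}(q)`, `F_{U_n,*}(q)` and `L_{U_n,*}(q)`.) -/
theorem statement8 (n : ℕ) (hn : 1 ≤ n) (π : Equiv.Perm (Fin n)) (hπ : π * π = 1)
    (f : ℕ) (hf : f = (Finset.univ.filter fun i => π i = i).card)
    (φ : (univMat n).Group ≃* (univMat n).Group)
    (hφ : ∀ i, φ ((univMat n).simple i) = (univMat n).simple (π i)) :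
    (∀ k : ℕ, 1 ≤ k →
        Nat.card {w : (univMat n).Group // (univMat n).toCoxeterSystem.length w = k} =
          n * (n - 1) ^ (k - 1)) ∧
    (∀ k : ℕ, 1 ≤ k →
        Nat.card {w : (univMat n).Group //
            φ w = w ∧ (univMat n).toCoxeterSystem.length w = k} =
          f * (f - 1) ^ (k - 1)) ∧
    (∀ k : ℕ,
        Nat.card {w : (univMat n).Group //
            w⁻¹ = φ w ∧ (univMat n).toCoxeterSystem.length w = 2 * k + 1} =
          f * (n - 1) ^ k) ∧
    (∀ k : ℕ, 1 ≤ k →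
        Nat.card {w : (univMat n).Group //
            w⁻¹ = φ w ∧ (univMat n).toCoxeterSystem.length w = 2 * k} =
          (n - f) * (n - 1) ^ (k - 1)) :=
  statement8_general n π hπ f hf φ hφ
end

section
/- Let n ≥ 2 and let R = {u s_i u⁻¹ : u ∈ S̃_n, 0 ≤ i ≤ n−1} be the set of reflections of S̃_n. For every involution w ∈ S̃_n (i.e. w² = 1), the minimal natural number k such that w equals a product of k elements of R (with k = 0 for w = 1) is exactly (n − #{i ∈ {1,…,n} : w(i) = i})/2. In other words, the absolute length of an involution w in S̃_n equals half of n minus the number of its fixed points in {1,…,n}. -/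
/-!
Every reflection `u s_i u⁻¹` is an affine transposition `t_{a,b}`, exchanging `a + kn` and
`b + kn` for all `k`; conversely every `t_{a,b}` with `a ≢ b (mod n)` is a reflection, since
conjugating by `t_{b-1,b}` shortens `b - a`. A transposition moves at most two points of
`{1,…,n}`, so a product of `k` reflections moves at most `2k` of them. Conversely, if the
involution `w` moves `a ∈ {1,…,n}`, then `t_{a,w a} w` is again an involution; it fixes the
classes of `a` and `w a` and agrees with `w` elsewhere, so it moves at least two fewer points of
`{1,…,n}`, and induction writes `w` as a product of half as many reflections as it moves points
there.
-/

open scoped Classical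

noncomputable section

/-- The function underlying the simple generator `s_i` of the affine symmetric group. -/
def sFun (n i : ℕ) (j : ℤ) : ℤ :=
  if (n : ℤ) ∣ j - (i : ℤ) then j + 1
  else if (n : ℤ) ∣ j - ((i : ℤ) + 1) then j - 1
  else j

lemma sFun_invol (n i : ℕ) (h : ¬ (n : ℤ) ∣ 1) : Function.Involutive (sFun n i) := by
  intro j
  unfold sFun
  by_cases h1 : (n : ℤ) ∣ j - (i : ℤ)
  · have h2 : ¬ (n : ℤ) ∣ (j + 1) - (i : ℤ) := by
      intro hd
      have h3 : (n : ℤ) ∣ ((j + 1) - (i : ℤ)) - (j - (i : ℤ)) := dvd_sub hd h1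
      have h4 : ((j + 1) - (i : ℤ)) - (j - (i : ℤ)) = 1 := by ring
      rw [h4] at h3
      exact h h3
    have h3 : (n : ℤ) ∣ (j + 1) - ((i : ℤ) + 1) := by
      have h4 : (j + 1) - ((i : ℤ) + 1) = j - (i : ℤ) := by ring
      rw [h4]
      exact h1
    rw [if_pos h1, if_neg h2, if_pos h3]
    ring
  · by_cases h2 : (n : ℤ) ∣ j - ((i : ℤ) + 1)
    · have h3 : (n : ℤ) ∣ (j - 1) - (i : ℤ) := by
        have h4 : (j - 1) - (i : ℤ) = j - ((i : ℤ) + 1) := by ring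
        rw [h4]
        exact h2
      rw [if_neg h1, if_pos h2, if_pos h3]
      ring
    · rw [if_neg h1, if_neg h2, if_neg h1, if_neg h2]

/-- The simple generator `s_i` of the affine symmetric group `S̃_n`:
`j ↦ j+1` if `j ≡ i (mod n)`, `j ↦ j-1` if `j ≡ i+1 (mod n)`, `j ↦ j` otherwise.
(For the degenerate case `n = 1`, where this recipe does not define a bijection,
we use the identity; all results below assume `n ≥ 2`.) -/
def sGen (n i : ℕ) : Equiv.Perm ℤ :=
  if h : (n : ℤ) ∣ 1 then 1
  else ⟨sFun n i, sFun n i, sFun_invol n i h, sFun_invol n i h⟩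

/-- Membership in the affine symmetric group `S̃_n`: a bijection `w : ℤ → ℤ` with
`w (i + n) = w i + n` for all `i` and `∑_{i=1}^n w i = ∑_{i=1}^n i`. -/
def IsAffinePerm (n : ℕ) (w : Equiv.Perm ℤ) : Prop :=
  (∀ i : ℤ, w (i + (n : ℤ)) = w i + (n : ℤ)) ∧
    ∑ i ∈ Finset.Icc (1 : ℤ) (n : ℤ), w i = ∑ i ∈ Finset.Icc (1 : ℤ) (n : ℤ), i

/-- The length of `w ∈ S̃_n`: the number of pairs `(i, j)` with `i < j`, `1 ≤ j ≤ n`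
and `w i > w j`. -/
def ellA (n : ℕ) (w : Equiv.Perm ℤ) : ℕ :=
  Set.ncard {p : ℤ × ℤ | p.1 < p.2 ∧ 1 ≤ p.2 ∧ p.2 ≤ (n : ℤ) ∧ w p.2 < w p.1}

/-- The absolute length of an involution `w ∈ S̃_n`:
`(n − #{i ∈ {1,…,n} : w i = i}) / 2`. -/
def ellAbs (n : ℕ) (w : Equiv.Perm ℤ) : ℕ :=
  (n - Set.ncard {i : ℤ | 1 ≤ i ∧ i ≤ (n : ℤ) ∧ w i = i}) / 2

/-- `Ω_n`: involutions in `S̃_n` which are minimal length double coset representatives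
for the parabolic subgroup generated by `s_1, …, s_{n-1}`. -/
def OmegaSet (n : ℕ) : Set (Equiv.Perm ℤ) :=
  {w | IsAffinePerm n w ∧ w * w = 1 ∧
    ∀ i : ℕ, 1 ≤ i → i ≤ n - 1 →
      ellA n (sGen n i * w) = ellA n w + 1 ∧ ellA n (w * sGen n i) = ellA n w + 1}

/-- Inverse of a power series with constant term `1` (via `invOfUnit`). -/
def pinv (f : PowerSeries ℤ) : PowerSeries ℤ := PowerSeries.invOfUnit f 1

/-- Substitution of `q ↦ q²` in a power series: `(sq2 f)(q) = f(q²)`. -/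
def sq2 (f : PowerSeries ℤ) : PowerSeries ℤ :=
  PowerSeries.mk fun j => if 2 ∣ j then PowerSeries.coeff (j / 2) f else 0

/-- The `q`-integer `[m]_q = 1 + q + ⋯ + q^{m-1}` as a power series. -/
def qInt (m : ℕ) : PowerSeries ℤ := ∑ i ∈ Finset.range m, (PowerSeries.X : PowerSeries ℤ) ^ i

/-- The `q`-factorial `[m]_q!`. -/
def qFact (m : ℕ) : PowerSeries ℤ := ∏ k ∈ Finset.range m, qInt (k + 1)

/-- The Gaussian binomial coefficient `binom(m, k)_q = [m]_q!/([k]_q![m-k]_q!)`. -/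
def qBinom (m k : ℕ) : PowerSeries ℤ := qFact m * pinv (qFact k * qFact (m - k))

/-- The `q`-Pochhammer symbol `(−q^{k+1}; q)_m = ∏_{j=0}^{m-1} (1 + q^{k+1+j})`. -/
def qPochNeg (k m : ℕ) : PowerSeries ℤ :=
  ∏ j ∈ Finset.range m, (1 + (PowerSeries.X : PowerSeries ℤ) ^ (k + 1 + j))

/-- The Poincaré series `P̃_n(q) = ∑_{w ∈ S̃_n} q^{ℓ(w)}`, defined coefficientwise:
the coefficient of `q^j` is the (finite) number of `w ∈ S̃_n` with `ℓ(w) = j`. -/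
def Ptilde (n : ℕ) : PowerSeries ℤ :=
  PowerSeries.mk fun j =>
    (Nat.card {w : Equiv.Perm ℤ // IsAffinePerm n w ∧ ellA n w = j} : ℤ)

/-- The generating set `{s_i : i ∈ K_w}` where
`K_w = {i ∈ {1,…,n−1} : w s_i w ∈ {s_1,…,s_{n−1}}}`. -/
def Kgens (n : ℕ) (w : Equiv.Perm ℤ) : Set (Equiv.Perm ℤ) :=
  {y | ∃ i : ℕ, 1 ≤ i ∧ i ≤ n - 1 ∧ y = sGen n i ∧
      ∃ j : ℕ, 1 ≤ j ∧ j ≤ n - 1 ∧ w * sGen n i * w = sGen n j}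

/-- `F_w(q) = ∑_{x ∈ W_{K_w}, w x w = x} q^{ℓ(x)}`, defined coefficientwise. -/
def Fw (n : ℕ) (w : Equiv.Perm ℤ) : PowerSeries ℤ :=
  PowerSeries.mk fun j =>
    (Nat.card {x : Equiv.Perm ℤ //
        x ∈ Subgroup.closure (Kgens n w) ∧ w * x * w = x ∧ ellA n x = j} : ℤ)

/-- The `q`-part of the summand of `T_n(s,q)` attached to `w ∈ Ω_n`:
`q^{ℓ(w)} ((1−q)/(1+q))^{ℓ'(w)} P_n(q²) / F_w(q)`. -/
def termW (n : ℕ) (w : Equiv.Perm ℤ) : PowerSeries ℤ :=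
  (PowerSeries.X : PowerSeries ℤ) ^ ellA n w *
    ((1 - PowerSeries.X) * pinv (1 + PowerSeries.X)) ^ ellAbs n w *
    sq2 (qFact n) * pinv (Fw n w)

/-- The coefficient of `s^k` in `∑_{w ∈ Ω_n} q^{ℓ(w)} (s(1−q)/(1+q))^{ℓ'(w)} P_n(q²)/F_w(q)`,
computed coefficientwise in `q` (the sum over `w` converges coefficientwise). -/
def innerSum (n k : ℕ) : PowerSeries ℤ :=
  PowerSeries.mk fun j =>
    ∑' w : {w : Equiv.Perm ℤ // w ∈ OmegaSet n ∧ ellAbs n w = k},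
      PowerSeries.coeff j (termW n w.1)

/-- The power series `T_n(s, q) ∈ ℤ[[s, q]]`, realized as an element of `(ℤ[[q]])[[s]]`:
`T_n(s,q) = (P̃_n(q)/P̃_n(q²)) ∑_{w ∈ Ω_n} q^{ℓ(w)} (s(1−q)/(1+q))^{ℓ'(w)} P_n(q²)/F_w(q)`. -/
def Tser (n : ℕ) : PowerSeries (PowerSeries ℤ) :=
  PowerSeries.mk fun k => Ptilde n * pinv (sq2 (Ptilde n)) * innerSum n k

end

section ClassRep

variable {n : ℕ} {x y : ℤ}

def classRep (n : ℕ) (x : ℤ) : ℤ := (x - 1) % n + 1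

lemma classRep_mem (hn : 0 < n) (x : ℤ) : classRep n x ∈ Finset.Icc 1 (n : ℤ) := by
  have h0 := Int.emod_nonneg (x - 1) (by omega : (n : ℤ) ≠ 0)
  have h1 := Int.emod_lt_of_pos (x - 1) (by omega : (0 : ℤ) < n)
  rw [Finset.mem_Icc, classRep]
  omega

lemma classRep_modEq (n : ℕ) (x : ℤ) : classRep n x ≡ x [ZMOD n] := by
  simpa [classRep] using (Int.mod_modEq (x - 1) n).add_right 1

lemma classRep_eq_of_modEq (h : x ≡ y [ZMOD n]) : classRep n x = classRep n y := by
  rw [classRep, classRep, (h.sub_right 1).eq]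

lemma classRep_eq_self (hx : x ∈ Finset.Icc 1 (n : ℤ)) : classRep n x = x := by
  rw [Finset.mem_Icc] at hx
  rw [classRep, Int.emod_eq_of_lt (by omega) (by omega)]
  ring

lemma filter_modEq_Icc_eq_singleton (hn : 0 < n) (y : ℤ) :
    (Finset.Icc 1 (n : ℤ)).filter (· ≡ y [ZMOD n]) = {classRep n y} := by
  ext x
  simp only [Finset.mem_filter, Finset.mem_singleton]
  constructor
  · rintro ⟨hx, hxy⟩
    rw [← classRep_eq_of_modEq hxy, classRep_eq_self hx]
  · rintro rfl
    exact ⟨classRep_mem hn y, classRep_modEq n y⟩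

lemma sum_Icc_ite_modEq (hn : 0 < n) (y c : ℤ) :
    ∑ j ∈ Finset.Icc 1 (n : ℤ), (if j ≡ y [ZMOD n] then c else 0) = c := by
  rw [← Finset.sum_filter, filter_modEq_Icc_eq_singleton hn, Finset.sum_singleton]

lemma Function.Periodic.apply_classRep {g : ℤ → ℤ} (hg : Function.Periodic g n) (x : ℤ) :
    g (classRep n x) = g x := by
  have := hg.sub_int_mul_eq (x := x) ((x - 1) / n)
  rw [classRep, Int.emod_def, show x - 1 - n * ((x - 1) / n) + 1 = x - (x - 1) / n * n by ring]
  simpa using this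

end ClassRep

def ShiftEquivariant (n : ℕ) (w : Equiv.Perm ℤ) : Prop :=
  ∀ i : ℤ, w (i + n) = w i + n

namespace ShiftEquivariant

variable {n : ℕ} {u v w : Equiv.Perm ℤ}

lemma periodic_sub_self (hw : ShiftEquivariant n w) :
    Function.Periodic (fun x => w x - x) (n : ℤ) := fun x => by
  simp only [hw x, add_sub_add_right_eq_sub]

lemma apply_add_mul (hw : ShiftEquivariant n w) (x k : ℤ) : w (x + k * n) = w x + k * n := by
  have : w (x + k * n) - (x + k * n) = w x - x := hw.periodic_sub_self.int_mul k x
  linarith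

lemma sub_eq_of_modEq (hw : ShiftEquivariant n w) {x y : ℤ} (h : x ≡ y [ZMOD n]) :
    w y - w x = y - x := by
  obtain ⟨k, rfl⟩ := Int.modEq_iff_add_fac.mp h
  rw [mul_comm, hw.apply_add_mul]
  ring

lemma modEq_iff (hw : ShiftEquivariant n w) {x y : ℤ} :
    w x ≡ w y [ZMOD n] ↔ x ≡ y [ZMOD n] := by
  refine ⟨fun h => ?_, fun h => Int.modEq_iff_add_fac.mpr ⟨(y - x) / n, ?_⟩⟩
  · obtain ⟨k, hk⟩ := Int.modEq_iff_add_fac.mp h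
    rw [mul_comm, ← hw.apply_add_mul] at hk
    exact Int.modEq_iff_add_fac.mpr ⟨k, by rw [w.injective hk, mul_comm]⟩
  · rw [Int.mul_ediv_cancel' (Int.modEq_iff_dvd.mp h)]
    linarith [hw.sub_eq_of_modEq h]

lemma mul (hu : ShiftEquivariant n u) (hv : ShiftEquivariant n v) :
    ShiftEquivariant n (u * v) := fun i => by
  simp only [Equiv.Perm.mul_apply, hv i, hu (v i)]

lemma inv (hw : ShiftEquivariant n w) :
    ShiftEquivariant n w⁻¹ := fun i => w.injective <| by
  simp only [Equiv.Perm.coe_inv, Equiv.apply_symm_apply, hw (w.symm i)]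

lemma sum_Icc_comp (hn : 0 < n)
    (hv : ShiftEquivariant n v) {g : ℤ → ℤ} (hg : Function.Periodic g n) :
    ∑ j ∈ Finset.Icc 1 (n : ℤ), g (v j) = ∑ j ∈ Finset.Icc 1 (n : ℤ), g j := by
  have hrep : ∀ (u : Equiv.Perm ℤ), ShiftEquivariant n u → ∀ j ∈ Finset.Icc 1 (n : ℤ),
      classRep n (u⁻¹ (classRep n (u j))) = j := fun u hu j hj => by
    rw [classRep_eq_of_modEq ((hu.inv.modEq_iff).mpr (classRep_modEq n (u j))),
      Equiv.Perm.coe_inv, Equiv.symm_apply_apply, classRep_eq_self hj]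
  refine Finset.sum_nbij' (fun j => classRep n (v j)) (fun j => classRep n (v⁻¹ j))
    (fun j _ => classRep_mem hn _) (fun j _ => classRep_mem hn _) (hrep v hv) ?_
    (fun j _ => (hg.apply_classRep _).symm)
  intro j hj
  simpa using hrep v⁻¹ hv.inv j hj

end ShiftEquivariant

lemma IsAffinePerm.shiftEquivariant {n : ℕ} {w : Equiv.Perm ℤ} (hw : IsAffinePerm n w) :
    ShiftEquivariant n w :=
  hw.1

lemma IsAffinePerm.mul {n : ℕ} {u v : Equiv.Perm ℤ} (hn : 0 < n)
    (hu : IsAffinePerm n u) (hv : IsAffinePerm n v) : IsAffinePerm n (u * v) := by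
  refine ⟨hu.shiftEquivariant.mul hv.shiftEquivariant, ?_⟩
  have hshift : ∑ j ∈ Finset.Icc 1 (n : ℤ), (u (v j) - v j) =
      ∑ j ∈ Finset.Icc 1 (n : ℤ), (u j - j) :=
    hv.shiftEquivariant.sum_Icc_comp hn hu.shiftEquivariant.periodic_sub_self
  rw [Finset.sum_sub_distrib, Finset.sum_sub_distrib, hu.2, hv.2, sub_self, sub_eq_zero] at hshift
  exact hshift

section Moved

variable {α : Type*} [DecidableEq α]

def movedIn (s : Finset α) (w : Equiv.Perm α) : Finset α := s.filter fun j => w j ≠ j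

lemma movedIn_mul_subset (s : Finset α) (u v : Equiv.Perm α) :
    movedIn s (u * v) ⊆ movedIn s u ∪ movedIn s v := by
  intro j hj
  rw [movedIn, Finset.mem_filter, Equiv.Perm.mul_apply] at hj
  obtain ⟨hj, hne⟩ := hj
  simp only [movedIn, Finset.mem_union, Finset.mem_filter]
  by_cases hv : v j = j
  · exact Or.inl ⟨hj, by rwa [hv] at hne⟩
  · exact Or.inr ⟨hj, hv⟩

lemma card_movedIn_list_prod_le (s : Finset α) {c : ℕ} (l : List (Equiv.Perm α))
    (h : ∀ x ∈ l, (movedIn s x).card ≤ c) : (movedIn s l.prod).card ≤ c * l.length := by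
  induction l with
  | nil => simp [movedIn]
  | cons x l ih =>
    calc (movedIn s (x * l.prod)).card
        ≤ (movedIn s x ∪ movedIn s l.prod).card :=
          Finset.card_le_card (movedIn_mul_subset s _ _)
      _ ≤ (movedIn s x).card + (movedIn s l.prod).card := Finset.card_union_le _ _
      _ ≤ c * (x :: l).length := by
        have := h x List.mem_cons_self
        have := ih fun y hy => h y (List.mem_cons_of_mem x hy)
        rw [List.length_cons]
        linarith

end Moved

section AffTrans

variable {n : ℕ} {a b j : ℤ}

def affTransFun (n : ℕ) (a b j : ℤ) : ℤ :=
  if j ≡ a [ZMOD n] then j + (b - a) else if j ≡ b [ZMOD n] then j - (b - a) else j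

lemma affTransFun_of_modEq_left (hj : j ≡ a [ZMOD n]) : affTransFun n a b j = j + (b - a) :=
  if_pos hj

lemma affTransFun_of_modEq_right (hab : ¬ a ≡ b [ZMOD n]) (hj : j ≡ b [ZMOD n]) :
    affTransFun n a b j = j - (b - a) := by
  rw [affTransFun, if_neg fun h => hab (h.symm.trans hj), if_pos hj]

lemma affTransFun_of_not_modEq (ha : ¬ j ≡ a [ZMOD n]) (hb : ¬ j ≡ b [ZMOD n]) :
    affTransFun n a b j = j := by
  rw [affTransFun, if_neg ha, if_neg hb]

lemma affTransFun_involutive (hab : ¬ a ≡ b [ZMOD n]) :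
    Function.Involutive (affTransFun n a b) := by
  intro j
  by_cases ha : j ≡ a [ZMOD n]
  · have hb : j + (b - a) ≡ b [ZMOD n] := by simpa using ha.add_right (b - a)
    rw [affTransFun_of_modEq_left ha, affTransFun_of_modEq_right hab hb]
    ring
  by_cases hb : j ≡ b [ZMOD n]
  · have ha' : j - (b - a) ≡ a [ZMOD n] := by simpa using hb.sub_right (b - a)
    rw [affTransFun_of_modEq_right hab hb, affTransFun_of_modEq_left ha']
    ring
  rw [affTransFun_of_not_modEq ha hb, affTransFun_of_not_modEq ha hb]

/-- Exchanges `a + kn` and `b + kn` for every `k`; it is the identity when `a ≡ b [ZMOD n]`,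
where that recipe is not a bijection. -/
def affTrans (n : ℕ) (a b : ℤ) : Equiv.Perm ℤ :=
  if hab : a ≡ b [ZMOD n] then 1 else (affTransFun_involutive hab).toPerm

lemma affTrans_apply (hab : ¬ a ≡ b [ZMOD n]) (j : ℤ) :
    affTrans n a b j = affTransFun n a b j := by
  rw [affTrans, dif_neg hab]
  rfl

lemma affTrans_of_modEq (hab : a ≡ b [ZMOD n]) : affTrans n a b = 1 := dif_pos hab

lemma affTrans_apply_of_not_modEq (ha : ¬ j ≡ a [ZMOD n]) (hb : ¬ j ≡ b [ZMOD n]) :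
    affTrans n a b j = j := by
  by_cases hab : a ≡ b [ZMOD n]
  · rw [affTrans_of_modEq hab, Equiv.Perm.one_apply]
  · rw [affTrans_apply hab, affTransFun_of_not_modEq ha hb]

lemma affTrans_involutive (n : ℕ) (a b : ℤ) : Function.Involutive (affTrans n a b) := by
  by_cases hab : a ≡ b [ZMOD n]
  · simp [affTrans_of_modEq hab, Function.Involutive]
  · intro j
    rw [affTrans_apply hab, affTrans_apply hab]
    exact affTransFun_involutive hab j

lemma affTrans_mul_self (n : ℕ) (a b : ℤ) : affTrans n a b * affTrans n a b = 1 :=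
  Equiv.ext (affTrans_involutive n a b)

lemma affTrans_comm (n : ℕ) (a b : ℤ) : affTrans n a b = affTrans n b a := by
  by_cases hab : a ≡ b [ZMOD n]
  · rw [affTrans_of_modEq hab, affTrans_of_modEq hab.symm]
  have hba : ¬ b ≡ a [ZMOD n] := fun h => hab h.symm
  ext j
  rw [affTrans_apply hab, affTrans_apply hba]
  by_cases ha : j ≡ a [ZMOD n]
  · rw [affTransFun_of_modEq_left ha, affTransFun_of_modEq_right hba ha]; ring
  by_cases hb : j ≡ b [ZMOD n]
  · rw [affTransFun_of_modEq_left hb, affTransFun_of_modEq_right hab hb]; ring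
  rw [affTransFun_of_not_modEq ha hb, affTransFun_of_not_modEq hb ha]

lemma ShiftEquivariant.conj_affTrans {v : Equiv.Perm ℤ} (hv : ShiftEquivariant n v) (a b : ℤ) :
    v * affTrans n a b * v⁻¹ = affTrans n (v a) (v b) := by
  by_cases hab : a ≡ b [ZMOD n]
  · rw [affTrans_of_modEq hab, affTrans_of_modEq (hv.modEq_iff.mpr hab), mul_one, mul_inv_cancel]
  have hab' : ¬ v a ≡ v b [ZMOD n] := fun h => hab (hv.modEq_iff.mp h)
  ext j
  obtain ⟨i, rfl⟩ := v.surjective j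
  simp only [Equiv.Perm.mul_apply, Equiv.Perm.coe_inv, Equiv.symm_apply_apply,
    affTrans_apply hab, affTrans_apply hab']
  by_cases ha : i ≡ a [ZMOD n]
  · have hb : i + (b - a) ≡ b [ZMOD n] := by simpa using ha.add_right (b - a)
    rw [affTransFun_of_modEq_left ha, affTransFun_of_modEq_left (hv.modEq_iff.mpr ha)]
    linarith [hv.sub_eq_of_modEq ha, hv.sub_eq_of_modEq hb]
  by_cases hb : i ≡ b [ZMOD n]
  · have ha' : i - (b - a) ≡ a [ZMOD n] := by simpa using hb.sub_right (b - a)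
    rw [affTransFun_of_modEq_right hab hb,
      affTransFun_of_modEq_right hab' (hv.modEq_iff.mpr hb)]
    linarith [hv.sub_eq_of_modEq hb, hv.sub_eq_of_modEq ha']
  rw [affTransFun_of_not_modEq ha hb,
    affTransFun_of_not_modEq (mt hv.modEq_iff.mp ha) (mt hv.modEq_iff.mp hb)]

lemma shiftEquivariant_affTrans (n : ℕ) (a b : ℤ) : ShiftEquivariant n (affTrans n a b) := by
  intro j
  by_cases hab : a ≡ b [ZMOD n]
  · simp [affTrans_of_modEq hab]
  rw [affTrans_apply hab, affTrans_apply hab]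
  have hj : j + n ≡ j [ZMOD n] := Int.add_modEq_right
  by_cases ha : j ≡ a [ZMOD n]
  · rw [affTransFun_of_modEq_left ha, affTransFun_of_modEq_left (hj.trans ha)]; ring
  by_cases hb : j ≡ b [ZMOD n]
  · rw [affTransFun_of_modEq_right hab hb, affTransFun_of_modEq_right hab (hj.trans hb)]; ring
  rw [affTransFun_of_not_modEq ha hb,
    affTransFun_of_not_modEq (fun h => ha (hj.symm.trans h)) (fun h => hb (hj.symm.trans h))]

end AffTrans

section AffTransAffine

variable {n : ℕ}

lemma isAffinePerm_affTrans (hn : 0 < n) (a b : ℤ) : IsAffinePerm n (affTrans n a b) := by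
  refine ⟨shiftEquivariant_affTrans n a b, ?_⟩
  by_cases hab : a ≡ b [ZMOD n]
  · simp [affTrans_of_modEq hab]
  have hsplit : ∀ j, affTrans n a b j =
      j + ((if j ≡ a [ZMOD n] then b - a else 0) - (if j ≡ b [ZMOD n] then b - a else 0)) := by
    intro j
    rw [affTrans_apply hab]
    by_cases ha : j ≡ a [ZMOD n]
    · rw [affTransFun_of_modEq_left ha, if_pos ha, if_neg fun hb => hab (ha.symm.trans hb)]
      ring
    by_cases hb : j ≡ b [ZMOD n]
    · rw [affTransFun_of_modEq_right hab hb, if_neg ha, if_pos hb]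
      ring
    rw [affTransFun_of_not_modEq ha hb, if_neg ha, if_neg hb]
    ring
  simp only [hsplit, Finset.sum_add_distrib, Finset.sum_sub_distrib, sum_Icc_ite_modEq hn,
    sub_self, add_zero]

lemma not_modEq_add_one (hn : 2 ≤ n) (a : ℤ) : ¬ a ≡ a + 1 [ZMOD n] := by
  intro h
  have := Int.le_of_dvd one_pos (by simpa using Int.modEq_iff_dvd.mp h)
  omega

lemma sGen_eq_affTrans (hn : 2 ≤ n) {i : ℕ} {a : ℤ} (h : (i : ℤ) ≡ a [ZMOD n]) :
    sGen n i = affTrans n a (a + 1) := by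
  have hn1 : ¬ (n : ℤ) ∣ 1 := fun hd =>
    not_modEq_add_one hn 0 (Int.modEq_iff_dvd.mpr (by simpa using hd))
  have hdvd : ∀ {j c d : ℤ}, c ≡ d [ZMOD n] → ((n : ℤ) ∣ j - c ↔ j ≡ d [ZMOD n]) :=
    fun hcd => by
      rw [← Int.modEq_iff_dvd]
      exact ⟨fun hcj => (hcd.symm.trans hcj).symm, fun hjd => hcd.trans hjd.symm⟩
  ext j
  rw [sGen, dif_neg hn1, affTrans_apply (not_modEq_add_one hn a)]
  show sFun n i j = _
  simp only [sFun, affTransFun, hdvd h, hdvd (h.add_right 1), add_sub_cancel_left]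

end AffTransAffine

section Reflection

variable {n : ℕ} {x : Equiv.Perm ℤ}

def IsReflection (n : ℕ) (x : Equiv.Perm ℤ) : Prop :=
  ∃ u : Equiv.Perm ℤ, IsAffinePerm n u ∧ ∃ i : ℕ, i ≤ n - 1 ∧ x = u * sGen n i * u⁻¹

lemma IsReflection.exists_eq_affTrans (hn : 2 ≤ n) (hx : IsReflection n x) :
    ∃ a b, x = affTrans n a b := by
  obtain ⟨u, hu, i, -, rfl⟩ := hx
  refine ⟨u i, u (i + 1), ?_⟩
  rw [sGen_eq_affTrans hn (Int.ModEq.refl _), hu.shiftEquivariant.conj_affTrans]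

lemma IsReflection.conj (hn : 0 < n) {v : Equiv.Perm ℤ} (hv : IsAffinePerm n v)
    (hx : IsReflection n x) : IsReflection n (v * x * v⁻¹) := by
  obtain ⟨u, hu, i, hi, rfl⟩ := hx
  exact ⟨v * u, hv.mul hn hu, i, hi, by group⟩

lemma isReflection_affTrans_add_one (hn : 2 ≤ n) (a : ℤ) :
    IsReflection n (affTrans n a (a + 1)) := by
  have h0 := Int.emod_nonneg a (by omega : (n : ℤ) ≠ 0)
  have h1 := Int.emod_lt_of_pos a (by omega : (0 : ℤ) < n)
  refine ⟨1, ⟨fun _ => rfl, rfl⟩, (a % n).toNat, by omega, ?_⟩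
  rw [one_mul, inv_one, mul_one, sGen_eq_affTrans hn]
  rw [Int.toNat_of_nonneg h0]
  exact Int.mod_modEq a n

/-- Conjugating by the simple reflection `affTrans n (b - 1) b` shortens `b - a` by one or two. -/
theorem isReflection_affTrans (hn : 2 ≤ n) {a b : ℤ} (hab : ¬ a ≡ b [ZMOD n]) :
    IsReflection n (affTrans n a b) := by
  induction hd : (b - a).natAbs using Nat.strong_induction_on generalizing a b with
  | _ d ih =>
  wlog hlt : a < b generalizing a b
  · rw [affTrans_comm]
    have hne : a ≠ b := by rintro rfl; exact hab (Int.ModEq.refl a)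
    exact this (fun h => hab h.symm) (by omega) (by omega)
  obtain rfl | hb2 : b = a + 1 ∨ a + 2 ≤ b := by omega
  · exact isReflection_affTrans_add_one hn a
  have hb1 : ¬ b - 1 ≡ b [ZMOD n] := by simpa using not_modEq_add_one hn (b - 1)
  set v := affTrans n (b - 1) b with hv
  have hvb : v b = b - 1 := by
    rw [hv, affTrans_apply hb1, affTransFun_of_modEq_right hb1 (Int.ModEq.refl b)]
    ring
  have hva : v a = a ∨ v a = a + 1 := by
    rw [hv, affTrans_apply hb1]
    by_cases ha : a ≡ b - 1 [ZMOD n]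
    · right
      rw [affTransFun_of_modEq_left ha]
      ring
    · exact Or.inl (affTransFun_of_not_modEq ha hab)
  have hconj : affTrans n a b = v * affTrans n (v a) (v b) * v⁻¹ := by
    rw [(shiftEquivariant_affTrans n (b - 1) b).conj_affTrans, affTrans_involutive,
      affTrans_involutive]
  rw [hconj]
  refine (ih _ ?_ (fun h => hab ?_) rfl).conj (by omega) (isAffinePerm_affTrans (by omega) _ _)
  · rcases hva with h | h <;> rw [h, hvb] <;> omega
  · exact (shiftEquivariant_affTrans n (b - 1) b).modEq_iff.mp h

end Reflection

section Involution

variable {n : ℕ} {w : Equiv.Perm ℤ} {a : ℤ}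

lemma card_movedIn_affTrans_le (a b : ℤ) :
    (movedIn (Finset.Icc 1 (n : ℤ)) (affTrans n a b)).card ≤ 2 := by
  refine (Finset.card_le_card fun j hj => ?_).trans
    (Finset.card_le_two (a := classRep n a) (b := classRep n b))
  rw [movedIn, Finset.mem_filter] at hj
  rw [Finset.mem_insert, Finset.mem_singleton]
  by_contra! h
  refine hj.2 (affTrans_apply_of_not_modEq (fun ha => h.1 ?_) (fun hb => h.2 ?_))
  · rw [← classRep_eq_of_modEq ha, classRep_eq_self hj.1]
  · rw [← classRep_eq_of_modEq hb, classRep_eq_self hj.1]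

theorem card_movedIn_list_prod_le_two_mul (hn : 2 ≤ n) (l : List (Equiv.Perm ℤ))
    (hl : ∀ x ∈ l, IsReflection n x) :
    (movedIn (Finset.Icc 1 (n : ℤ)) l.prod).card ≤ 2 * l.length :=
  card_movedIn_list_prod_le _ l fun x hx => by
    obtain ⟨a, b, rfl⟩ := (hl x hx).exists_eq_affTrans hn
    exact card_movedIn_affTrans_le a b

lemma ShiftEquivariant.eq_one_of_forall_Icc (hn : 0 < n) (hw : ShiftEquivariant n w)
    (h : ∀ j ∈ Finset.Icc 1 (n : ℤ), w j = j) : w = 1 := by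
  ext j
  have := hw.sub_eq_of_modEq (classRep_modEq n j)
  rw [h _ (classRep_mem hn j)] at this
  simp only [Equiv.Perm.one_apply]
  linarith

lemma ShiftEquivariant.not_modEq_apply (hw : ShiftEquivariant n w) (hinv : w * w = 1)
    (ha : w a ≠ a) : ¬ a ≡ w a [ZMOD n] := fun h => by
  have hwwa : w (w a) = a := DFunLike.congr_fun hinv a
  have := hw.sub_eq_of_modEq h
  exact ha (by linarith)

lemma affTrans_mul_apply_of_modEq (hw : ShiftEquivariant n w) (hinv : w * w = 1)
    (hab : ¬ a ≡ w a [ZMOD n]) {j : ℤ} (hj : j ≡ a [ZMOD n] ∨ j ≡ w a [ZMOD n]) :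
    (affTrans n a (w a) * w) j = j := by
  have hwwa : w (w a) = a := DFunLike.congr_fun hinv a
  rw [Equiv.Perm.mul_apply, affTrans_apply hab]
  rcases hj with hj | hj
  · rw [affTransFun_of_modEq_right hab (hw.modEq_iff.mpr hj)]
    linarith [hw.sub_eq_of_modEq hj]
  · have hwj : w j ≡ a [ZMOD n] := hwwa ▸ hw.modEq_iff.mpr hj
    rw [affTransFun_of_modEq_left hwj]
    linarith [hw.sub_eq_of_modEq hj]

lemma affTrans_mul_apply_of_not_modEq (hw : ShiftEquivariant n w) (hinv : w * w = 1) {j : ℤ}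
    (ha : ¬ j ≡ a [ZMOD n]) (hb : ¬ j ≡ w a [ZMOD n]) :
    (affTrans n a (w a) * w) j = w j := by
  have hwwj : w (w j) = j := DFunLike.congr_fun hinv j
  refine affTrans_apply_of_not_modEq (fun h => hb ?_) (fun h => ha (hw.modEq_iff.mp h))
  rw [← hwwj]
  exact hw.modEq_iff.mpr h

lemma affTrans_mul_mul_self (hw : ShiftEquivariant n w) (hinv : w * w = 1) :
    (affTrans n a (w a) * w) * (affTrans n a (w a) * w) = 1 := by
  have hwwa : w (w a) = a := DFunLike.congr_fun hinv a
  have hconj : w * affTrans n a (w a) * w = affTrans n a (w a) := by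
    calc w * affTrans n a (w a) * w = w * affTrans n a (w a) * w⁻¹ := by
          rw [inv_eq_of_mul_eq_one_right hinv]
      _ = affTrans n a (w a) := by rw [hw.conj_affTrans, hwwa, affTrans_comm]
  calc (affTrans n a (w a) * w) * (affTrans n a (w a) * w)
      = affTrans n a (w a) * (w * affTrans n a (w a) * w) := by simp only [mul_assoc]
    _ = 1 := by rw [hconj, affTrans_mul_self]

lemma card_movedIn_affTrans_mul_add_two_le (hw : ShiftEquivariant n w) (hinv : w * w = 1)
    (ha : a ∈ Finset.Icc 1 (n : ℤ)) (hwa : w a ≠ a) :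
    (movedIn (Finset.Icc 1 (n : ℤ)) (affTrans n a (w a) * w)).card + 2 ≤
      (movedIn (Finset.Icc 1 (n : ℤ)) w).card := by
  have hn : 0 < n := by have := Finset.mem_Icc.mp ha; omega
  have hab := hw.not_modEq_apply hinv hwa
  set w' := affTrans n a (w a) * w
  set r := classRep n (w a)
  have hr : r ≡ w a [ZMOD n] := classRep_modEq n (w a)
  have hfix : ∀ j, (j ≡ a [ZMOD n] ∨ j ≡ w a [ZMOD n]) →
      j ∉ movedIn (Finset.Icc 1 (n : ℤ)) w' :=
    fun j hj hmem => (Finset.mem_filter.mp hmem).2 (affTrans_mul_apply_of_modEq hw hinv hab hj)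
  have har : a ∉ insert r (movedIn (Finset.Icc 1 (n : ℤ)) w') := by
    rw [Finset.mem_insert, not_or]
    exact ⟨fun h => hab (h ▸ hr), hfix a (Or.inl (Int.ModEq.refl a))⟩
  have hsub : insert a (insert r (movedIn (Finset.Icc 1 (n : ℤ)) w')) ⊆
      movedIn (Finset.Icc 1 (n : ℤ)) w := by
    intro j hj
    rw [movedIn, Finset.mem_filter]
    rcases Finset.mem_insert.mp hj with rfl | hj
    · exact ⟨ha, hwa⟩
    rcases Finset.mem_insert.mp hj with rfl | hj
    · refine ⟨classRep_mem hn _, fun h => hab ?_⟩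
      have hwwa : w (w a) = a := DFunLike.congr_fun hinv a
      have hwr : w r ≡ a [ZMOD n] := hwwa ▸ hw.modEq_iff.mpr hr
      exact (h ▸ hwr).symm.trans hr
    have hj' := hj
    rw [movedIn, Finset.mem_filter] at hj'
    obtain ⟨hja, hjb⟩ := not_or.mp fun h' => hfix j h' hj
    exact ⟨hj'.1, by rw [← affTrans_mul_apply_of_not_modEq hw hinv hja hjb]; exact hj'.2⟩
  calc (movedIn (Finset.Icc 1 (n : ℤ)) w').card + 2
      = (insert a (insert r (movedIn (Finset.Icc 1 (n : ℤ)) w'))).card := by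
        rw [Finset.card_insert_of_notMem har,
          Finset.card_insert_of_notMem (hfix r (Or.inr hr))]
    _ ≤ (movedIn (Finset.Icc 1 (n : ℤ)) w).card := Finset.card_le_card hsub

end Involution

theorem exists_reflection_list_prod_eq {n : ℕ} (hn : 2 ≤ n) {w : Equiv.Perm ℤ}
    (hw : ShiftEquivariant n w) (hinv : w * w = 1) :
    ∃ l : List (Equiv.Perm ℤ), (∀ x ∈ l, IsReflection n x) ∧ l.prod = w ∧
      2 * l.length ≤ (movedIn (Finset.Icc 1 (n : ℤ)) w).card := by
  induction hm : (movedIn (Finset.Icc 1 (n : ℤ)) w).card using Nat.strong_induction_on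
    generalizing w with
  | _ m ih =>
  by_cases hfix : ∀ j ∈ Finset.Icc 1 (n : ℤ), w j = j
  · exact ⟨[], by simp, by simp [hw.eq_one_of_forall_Icc (by omega) hfix], by simp⟩
  push Not at hfix
  obtain ⟨a, ha, hwa⟩ := hfix
  have hcard := card_movedIn_affTrans_mul_add_two_le hw hinv ha hwa
  obtain ⟨l, hl, hprod, hlen⟩ := ih _ (by omega)
    ((shiftEquivariant_affTrans n a (w a)).mul hw) (affTrans_mul_mul_self hw hinv) rfl
  refine ⟨affTrans n a (w a) :: l, ?_, ?_, ?_⟩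
  · exact List.forall_mem_cons.mpr
      ⟨isReflection_affTrans hn (hw.not_modEq_apply hinv hwa), hl⟩
  · rw [List.prod_cons, hprod, ← mul_assoc, affTrans_mul_self, one_mul]
  · rw [List.length_cons]
    omega

lemma card_movedIn_Icc_eq {n : ℕ} (w : Equiv.Perm ℤ) :
    (movedIn (Finset.Icc 1 (n : ℤ)) w).card =
      n - Set.ncard {i : ℤ | 1 ≤ i ∧ i ≤ (n : ℤ) ∧ w i = i} := by
  have hfixed : {i : ℤ | 1 ≤ i ∧ i ≤ (n : ℤ) ∧ w i = i} =
      ↑((Finset.Icc 1 (n : ℤ)).filter fun j => w j = j) := by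
    ext j
    simp [and_assoc]
  have hsplit := Finset.card_filter_add_card_filter_not (s := Finset.Icc 1 (n : ℤ))
    (p := fun j => w j = j)
  rw [Int.card_Icc, add_sub_cancel_right, Int.toNat_natCast] at hsplit
  rw [hfixed, Set.ncard_coe_finset, movedIn]
  simp only [ne_eq]
  omega

/-- Let `n ≥ 2` and let `R = {u s_i u⁻¹ : u ∈ S̃_n, 0 ≤ i ≤ n−1}` be the set
of reflections of `S̃_n`. For every involution `w ∈ S̃_n`, the minimal number `k` of reflections
whose product is `w` (with `k = 0` for `w = 1`, via the empty product) equals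
`(n − #{i ∈ {1,…,n} : w i = i})/2`. -/
theorem statement9 (n : ℕ) (hn : 2 ≤ n) (w : Equiv.Perm ℤ)
    (hw : IsAffinePerm n w) (hinv : w * w = 1) :
    sInf {k : ℕ | ∃ l : List (Equiv.Perm ℤ),
        (∀ x ∈ l, ∃ u : Equiv.Perm ℤ, IsAffinePerm n u ∧
          ∃ i : ℕ, i ≤ n - 1 ∧ x = u * sGen n i * u⁻¹) ∧
        l.prod = w ∧ l.length = k} =
      (n - Set.ncard {i : ℤ | 1 ≤ i ∧ i ≤ (n : ℤ) ∧ w i = i}) / 2 := by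
  obtain ⟨l, hl, hprod, hlen⟩ := exists_reflection_list_prod_eq hn hw.shiftEquivariant hinv
  have hlower := card_movedIn_list_prod_le_two_mul hn l hl
  rw [hprod] at hlower
  rw [← card_movedIn_Icc_eq, IsLeast.csInf_eq (a := l.length)]
  · omega
  refine ⟨⟨l, hl, hprod, rfl⟩, ?_⟩
  rintro k ⟨l', hl', rfl, rfl⟩
  have := card_movedIn_list_prod_le_two_mul hn l' hl'
  omega
end

section
/- For every integer n ≥ 2, the map w ↦ λ(w) is a bijection from Ω'_n onto the set of weakly increasing integer sequences of length n whose terms sum to zero, i.e. onto {a ∈ ℤⁿ : a_1 ≤ a_2 ≤ ⋯ ≤ a_n and Σ_{i=1}^n a_i = 0}. -/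
open scoped Classical

lemma tau_aux (n : ℕ) : ∀ i : ℤ, (n : ℤ) + 1 - ((n : ℤ) + 1 - i) = i := fun i => by ring

/-- The bijection `τ_n : ℤ → ℤ`, `i ↦ n + 1 − i`. -/
def tauN (n : ℕ) : Equiv.Perm ℤ :=
  ⟨fun i => (n : ℤ) + 1 - i, fun i => (n : ℤ) + 1 - i, tau_aux n, tau_aux n⟩

/-- `λ(w) ∈ ℤⁿ`, where `λ_i(w) = ⌊(w(i) − 1)/n⌋` for `i ∈ {1, …, n}`
(indexed here by `i : Fin n`, standing for the position `i + 1`). -/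
noncomputable def lam (n : ℕ) (w : Equiv.Perm ℤ) : Fin n → ℤ :=
  fun i => Int.fdiv (w (((i : ℕ) : ℤ) + 1) - 1) (n : ℤ)

/-- `Ω'_n`: the set of `*`-twisted involutions in `S̃_n` (i.e. `(τ_n ∘ w)² = id`) that are
minimal length double coset representatives for the subgroup generated by `s_1, …, s_{n−1}`. -/
def Omega'Set (n : ℕ) : Set (Equiv.Perm ℤ) :=
  {w | IsAffinePerm n w ∧ (tauN n * w) * (tauN n * w) = 1 ∧
    ∀ i : ℕ, 1 ≤ i → i ≤ n - 1 →
      ellA n (sGen n i * w) = ellA n w + 1 ∧ ellA n (w * sGen n i) = ellA n w + 1}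

/-!
Write `w (x + 1) = λ_x n + r_x + 1` with `r` a permutation of `Fin n` (window coordinates). A
periodic `w` is determined by `λ` and `r`, and `∑ w i = ∑ i` becomes `∑ λ_x = 0`. For a twisted
involution `w⁻¹ = τ_n w τ_n`, so both minimal-length conditions reduce to `w 1 < ⋯ < w n`, i.e.
`x ↦ (λ_x, r_x)` is lexicographically increasing; in particular `λ` is weakly increasing. The
twisted-involution condition says that `x ↦ n - 1 - r_x` is an involution preserving the level sets
of `λ`; these are intervals on which it reverses the order, so it is their reflection. Hence `r` is
determined by `λ`, and conversely this recipe yields an element of `Ω'_n` for every weakly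
increasing `λ` with sum zero.
-/

namespace AffineSymmetricGroup

section Window

variable {n : ℕ}

lemma coe_add_one_mem_Icc (x : Fin n) : ((x : ℤ) + 1) ∈ Set.Icc (1 : ℤ) n := by
  have := x.isLt
  constructor <;> omega

lemma exists_eq_coe_add_one {p : ℤ} (hp : p ∈ Set.Icc (1 : ℤ) n) :
    ∃ x : Fin n, p = x + 1 :=
  ⟨⟨(p - 1).toNat, by have := hp.1; have := hp.2; omega⟩, by have := hp.1; dsimp only; omega⟩

lemma sum_Icc_eq_sum_fin (f : ℤ → ℤ) :
    ∑ p ∈ Finset.Icc (1 : ℤ) n, f p = ∑ x : Fin n, f (x + 1) := by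
  refine (Finset.sum_nbij (fun x : Fin n => (x : ℤ) + 1) (fun x _ => ?_) (fun x _ y _ h => ?_)
    (fun p hp => ?_) (fun _ _ => rfl)).symm
  · simp
  · simpa [Fin.ext_iff] using h
  · obtain ⟨x, rfl⟩ := exists_eq_coe_add_one (by simpa using hp)
    exact ⟨x, by simp⟩

lemma eq_zero_of_mem_Icc_of_sub_eq {p q m : ℤ} (hp : p ∈ Set.Icc (1 : ℤ) n)
    (hq : q ∈ Set.Icc (1 : ℤ) n) (h : p - q = m * n) : m = 0 := by
  obtain ⟨hp1, hp2⟩ := hp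
  obtain ⟨hq1, hq2⟩ := hq
  rcases lt_trichotomy m 0 with hm | hm | hm
  · nlinarith
  · exact hm
  · nlinarith

variable [NeZero n]

/-- Window coordinates: `p = k * n + x + 1` with `0 ≤ x < n`. -/
def window (n : ℕ) [NeZero n] : ℤ ≃ ℤ × Fin n :=
  (Equiv.subRight 1).trans (Int.divModEquiv n)

@[simp]
lemma window_symm_apply (q : ℤ × Fin n) : (window n).symm q = q.1 * n + q.2 + 1 := by
  simp [window]

lemma window_apply_fst (p : ℤ) : (window n p).1 = (p - 1) / n := rfl

lemma strictMono_window_symm : StrictMono ((window n).symm ∘ ofLex) := by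
  intro q q' h
  have hx := (ofLex q).2.isLt
  have hx' := (ofLex q').2.isLt
  simp only [Function.comp_apply, window_symm_apply]
  rcases Prod.Lex.lt_iff.1 h with hk | ⟨hk, hxx⟩
  · have : ((ofLex q).1 + 1) * n ≤ (ofLex q').1 * n := by gcongr; exact hk
    nlinarith
  · rw [hk]
    have : ((ofLex q).2 : ℕ) < (ofLex q').2 := hxx
    omega

lemma window_symm_lt_window_symm {q q' : ℤ × Fin n} :
    (window n).symm q < (window n).symm q' ↔ toLex q < toLex q' :=
  strictMono_window_symm.lt_iff_lt (a := toLex q) (b := toLex q')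

lemma sub_fst_window_mul_mem_Icc (p : ℤ) : p - (window n p).1 * n ∈ Set.Icc (1 : ℤ) n := by
  have h := (window n).symm_apply_apply p
  rw [window_symm_apply] at h
  rw [show p - (window n p).1 * n = (window n p).2 + 1 by linarith]
  exact coe_add_one_mem_Icc _

end Window

section Periodic

variable {n : ℕ}

def IsPeriodic (n : ℕ) (w : Equiv.Perm ℤ) : Prop := ∀ i : ℤ, w (i + n) = w i + n

namespace IsPeriodic

variable {w u : Equiv.Perm ℤ}

lemma apply_add_mul (hw : IsPeriodic n w) (i k : ℤ) : w (i + k * n) = w i + k * n := by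
  induction k using Int.induction_on with
  | zero => simp
  | succ k ih => rw [add_one_mul, ← add_assoc, hw, ih, add_assoc]
  | pred k ih =>
    have := hw (i + (-k - 1) * n)
    rw [show i + (-k - 1) * n + n = i + -k * n by ring, ih] at this
    linarith

lemma inv (hw : IsPeriodic n w) : IsPeriodic n w⁻¹ := fun i =>
  w.injective (by simp only [hw _, Equiv.Perm.coe_inv, Equiv.apply_symm_apply])

lemma mul (hw : IsPeriodic n w) (hu : IsPeriodic n u) : IsPeriodic n (w * u) := fun i => by
  simp only [Equiv.Perm.mul_apply, hu i, hw (u i)]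

end IsPeriodic

variable [NeZero n]

def residue (n : ℕ) [NeZero n] (w : Equiv.Perm ℤ) (x : Fin n) : Fin n := (window n (w (x + 1))).2

lemma window_apply_coe_add_one (w : Equiv.Perm ℤ) (x : Fin n) :
    window n (w (x + 1)) = (lam n w x, residue n w x) := by
  refine Prod.ext ?_ rfl
  rw [window_apply_fst, lam, Int.fdiv_eq_ediv_of_nonneg _ (by positivity)]

lemma apply_coe_add_one (w : Equiv.Perm ℤ) (x : Fin n) :
    w (x + 1) = (window n).symm (lam n w x, residue n w x) := by
  rw [← window_apply_coe_add_one, Equiv.symm_apply_apply]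

namespace IsPeriodic

variable {w w' : Equiv.Perm ℤ}

lemma apply_window_symm (hw : IsPeriodic n w) (k : ℤ) (x : Fin n) :
    w ((window n).symm (k, x)) = (window n).symm (k + lam n w x, residue n w x) := by
  have h := apply_coe_add_one w x
  simp only [window_symm_apply] at h ⊢
  rw [show k * n + x + 1 = (x + 1 : ℤ) + k * n by ring, hw.apply_add_mul, h]
  ring

lemma ext (hw : IsPeriodic n w) (hw' : IsPeriodic n w') (h : ∀ x : Fin n, w (x + 1) = w' (x + 1)) :
    w = w' := by
  ext p
  obtain ⟨⟨k, x⟩, rfl⟩ := (window n).symm.surjective p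
  simp only [window_symm_apply]
  rw [show k * n + x + 1 = (x + 1 : ℤ) + k * n by ring, hw.apply_add_mul, hw'.apply_add_mul, h]

lemma residue_injective (hw : IsPeriodic n w) : Function.Injective (residue n w) := by
  intro x y h
  have hxy := (hw.apply_window_symm 0 x).trans
    ((hw.apply_window_symm (lam n w x - lam n w y) y).trans
      (by rw [h, sub_add_cancel, zero_add])).symm
  exact (Prod.ext_iff.1 ((window n).symm.injective (w.injective hxy))).2

lemma sum_Icc (hw : IsPeriodic n w) :
    ∑ p ∈ Finset.Icc (1 : ℤ) n, w p = n * ∑ x, lam n w x + ∑ p ∈ Finset.Icc (1 : ℤ) n, p := by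
  have hres : ∑ x : Fin n, ((residue n w x : ℤ) + 1) = ∑ x : Fin n, ((x : ℤ) + 1) :=
    Fintype.sum_bijective _ hw.residue_injective.bijective_of_finite _ _ fun _ => rfl
  simp only [sum_Icc_eq_sum_fin, apply_coe_add_one, window_symm_apply, Finset.mul_sum]
  rw [← hres, ← Finset.sum_add_distrib]
  exact Finset.sum_congr rfl fun x _ => by ring

lemma isAffinePerm_iff (hw : IsPeriodic n w) : IsAffinePerm n w ↔ ∑ x, lam n w x = 0 := by
  rw [IsAffinePerm, hw.sum_Icc, add_eq_right, mul_eq_zero, Nat.cast_eq_zero,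
    or_iff_right (NeZero.ne n)]
  exact and_iff_right hw

end IsPeriodic

end Periodic

section Twist

variable {n : ℕ} {w : Equiv.Perm ℤ}

lemma tauN_apply (p : ℤ) : tauN n p = n + 1 - p := rfl

variable [NeZero n]

lemma tauN_window_symm (k : ℤ) (x : Fin n) :
    tauN n ((window n).symm (k, x)) = (window n).symm (-k, x.rev) := by
  have : ((x.rev : ℕ) : ℤ) = n - 1 - x := by have := x.isLt; rw [Fin.val_rev]; omega
  simp only [tauN_apply, window_symm_apply, this]
  ring

/-- The involution of `Fin n` that `(τ_n w)² = 1` imposes on the window of `w`. -/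
def twist (n : ℕ) [NeZero n] (w : Equiv.Perm ℤ) (x : Fin n) : Fin n := (residue n w x).rev

lemma IsPeriodic.tauN_mul_sq_eq_one_iff (hw : IsPeriodic n w) :
    (tauN n * w) * (tauN n * w) = 1 ↔
      Function.Involutive (twist n w) ∧ ∀ x, lam n w (twist n w x) = lam n w x := by
  have h : ∀ k x, ((tauN n * w) * (tauN n * w)) ((window n).symm (k, x)) =
      (window n).symm (k + lam n w x - lam n w (twist n w x), twist n w (twist n w x)) := by
    intro k x
    simp only [Equiv.Perm.mul_apply, hw.apply_window_symm, tauN_window_symm, twist]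
    congr 2
    ring
  constructor
  · intro h1
    have h0 : ∀ x, ((0 : ℤ), x) =
        (0 + lam n w x - lam n w (twist n w x), twist n w (twist n w x)) :=
      fun x => (window n).symm.injective (by rw [← h, h1, Equiv.Perm.one_apply])
    exact ⟨fun x => (Prod.ext_iff.1 (h0 x)).2.symm,
      fun x => by linarith [(Prod.ext_iff.1 (h0 x)).1]⟩
  · rintro ⟨hinv, hlam⟩
    ext p
    obtain ⟨⟨k, x⟩, rfl⟩ := (window n).symm.surjective p
    rw [h, hinv x, hlam x, add_sub_cancel_right]
    rfl

lemma strictMonoOn_Icc_iff :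
    StrictMonoOn w (Set.Icc 1 n) ↔ StrictMono fun x => toLex (lam n w x, residue n w x) := by
  have key : ∀ x y : Fin n, w (x + 1) < w (y + 1) ↔
      toLex (lam n w x, residue n w x) < toLex (lam n w y, residue n w y) := fun x y => by
    rw [apply_coe_add_one, apply_coe_add_one, window_symm_lt_window_symm]
  constructor
  · intro h x y hxy
    have : (x : ℕ) < y := hxy
    exact (key x y).1 (h (coe_add_one_mem_Icc x) (coe_add_one_mem_Icc y) (by omega))
  · intro h p hp q hq hpq
    obtain ⟨x, rfl⟩ := exists_eq_coe_add_one hp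
    obtain ⟨y, rfl⟩ := exists_eq_coe_add_one hq
    exact (key x y).2 (h (Fin.lt_def.2 (by omega)))

end Twist

section Generators

variable {n i : ℕ} (hn : 2 ≤ n)
include hn

lemma not_natCast_dvd_one : ¬ (n : ℤ) ∣ 1 := fun h => by
  have := Int.le_of_dvd one_pos h
  omega

lemma sGen_apply (j : ℤ) : sGen n i j = sFun n i j := by
  rw [sGen, dif_neg (not_natCast_dvd_one hn)]
  rfl

lemma sGen_mul_self : sGen n i * sGen n i = 1 := by
  ext j
  rw [Equiv.Perm.mul_apply, sGen_apply hn, sGen_apply hn,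
    sFun_invol n i (not_natCast_dvd_one hn) j]
  rfl

lemma sGen_inv : (sGen n i)⁻¹ = sGen n i := inv_eq_of_mul_eq_one_right (sGen_mul_self hn)

lemma sGen_apply_self : sGen n i i = i + 1 := by
  rw [sGen_apply hn, sFun, if_pos (by simp)]

lemma sGen_apply_add_one_self : sGen n i (i + 1) = i := by
  have : ¬ (n : ℤ) ∣ i + 1 - i := by
    rw [add_sub_cancel_left]
    exact not_natCast_dvd_one hn
  rw [sGen_apply hn, sFun, if_neg this, if_pos (by simp), add_sub_cancel_right]

lemma isPeriodic_sGen : IsPeriodic n (sGen n i) := fun j => by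
  simp only [sGen_apply hn, sFun, show j + n - i = j - i + n by ring,
    show j + n - (i + 1) = j - (i + 1) + n by ring, dvd_add_self_right]
  split_ifs <;> ring

lemma abs_sGen_apply_sub_le (j : ℤ) : |sGen n i j - j| ≤ 1 := by
  rw [sGen_apply hn, sFun]
  split_ifs <;> simp

lemma dvd_sub_of_sGen_apply_eq_add_one {j : ℤ} (h : sGen n i j = j + 1) : (n : ℤ) ∣ j - i := by
  rw [sGen_apply hn, sFun] at h
  split_ifs at h with h1 <;> first | exact h1 | omega

variable (hi1 : 1 ≤ i) (hi2 : i ≤ n - 1)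
include hi1 hi2

lemma sGen_apply_mem_Icc {j : ℤ} (hj : j ∈ Set.Icc (1 : ℤ) n) :
    sGen n i j ∈ Set.Icc (1 : ℤ) n := by
  obtain ⟨hj1, hj2⟩ := hj
  rw [sGen_apply hn, sFun]
  split_ifs with h1 h2
  · have := Int.eq_zero_of_abs_lt_dvd h1 (by rw [abs_lt]; omega)
    constructor <;> omega
  · have := Int.eq_zero_of_abs_lt_dvd h2 (by rw [abs_lt]; omega)
    constructor <;> omega
  · exact ⟨hj1, hj2⟩

/-- As `s_i` moves every point by at most one, it can only reverse a pair `(i + k n, i + 1 + k n)`,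
and `q ∈ [1, n]` forces `k = 0`. -/
lemma sGen_lt_sGen {p q : ℤ} (hpq : p < q) (hq : q ∈ Set.Icc (1 : ℤ) n)
    (hne : ¬ (p = i ∧ q = i + 1)) : sGen n i p < sGen n i q := by
  by_contra hle
  have hlt : sGen n i q < sGen n i p :=
    lt_of_le_of_ne (not_lt.1 hle) ((sGen n i).injective.ne hpq.ne')
  have hp := abs_le.1 (abs_sGen_apply_sub_le hn (i := i) p)
  have hq' := abs_le.1 (abs_sGen_apply_sub_le hn (i := i) q)
  have hdvd := dvd_sub_of_sGen_apply_eq_add_one hn (by omega : sGen n i p = p + 1)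
  have := Int.eq_zero_of_abs_lt_dvd hdvd (by rw [abs_lt]; obtain ⟨_, _⟩ := hq; omega)
  omega

end Generators

section Length

variable {n : ℕ} {w : Equiv.Perm ℤ}

def inversions (n : ℕ) (w : Equiv.Perm ℤ) : Set (ℤ × ℤ) :=
  {p | p.1 < p.2 ∧ 1 ≤ p.2 ∧ p.2 ≤ (n : ℤ) ∧ w p.2 < w p.1}

lemma ellA_eq_ncard_inversions : ellA n w = (inversions n w).ncard := rfl

lemma inversions_mul_sGen (hn : 2 ≤ n) {i : ℕ} (hi1 : 1 ≤ i) (hi2 : i ≤ n - 1)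
    (hlt : w i < w (i + 1)) :
    inversions n (w * sGen n i) =
      insert ((i : ℤ), (i : ℤ) + 1) (Prod.map (sGen n i) (sGen n i) ⁻¹' inversions n w) := by
  set u := sGen n i
  have huu : ∀ j, u (u j) = j := fun j => by rw [← Equiv.Perm.mul_apply, sGen_mul_self hn]; rfl
  ext ⟨p, q⟩
  simp only [inversions, Set.mem_ofPred_eq, Set.mem_insert_iff, Set.mem_preimage, Prod.map,
    Prod.mk.injEq, Equiv.Perm.mul_apply]
  constructor
  · rintro ⟨hpq, hq1, hq2, hwpq⟩
    by_cases h : p = i ∧ q = i + 1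
    · exact Or.inl h
    · have huq := sGen_apply_mem_Icc hn hi1 hi2 ⟨hq1, hq2⟩
      exact Or.inr ⟨sGen_lt_sGen hn hi1 hi2 hpq ⟨hq1, hq2⟩ h, huq.1, huq.2, hwpq⟩
  · rintro (⟨rfl, rfl⟩ | ⟨hpq, huq1, huq2, hwpq⟩)
    · refine ⟨lt_add_one _, by omega, by omega, ?_⟩
      rwa [sGen_apply_self hn, sGen_apply_add_one_self hn]
    · have huq : u q ∈ Set.Icc (1 : ℤ) n := ⟨huq1, huq2⟩
      have hq := sGen_apply_mem_Icc hn hi1 hi2 huq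
      rw [huu] at hq
      refine ⟨?_, hq.1, hq.2, hwpq⟩
      by_cases h : u p = i ∧ u q = i + 1
      · have hp : p = i + 1 := by rw [← huu p, h.1, sGen_apply_self hn]
        have hq : q = i := by rw [← huu q, h.2, sGen_apply_add_one_self hn]
        rw [hp, hq, sGen_apply_self hn, sGen_apply_add_one_self hn] at hwpq
        exact absurd hwpq hlt.not_gt
      · have := sGen_lt_sGen hn hi1 hi2 hpq huq h
        change u (u p) < u (u q) at this
        rwa [huu, huu] at this

namespace IsPeriodic

lemma finite_inversions [NeZero n] (hw : IsPeriodic n w) : (inversions n w).Finite := by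
  set B := ∑ x : Fin n, |w (x + 1) - (x + 1)|
  have hB : ∀ j, |w j - j| ≤ B := fun j => by
    obtain ⟨x, hx⟩ := exists_eq_coe_add_one (sub_fst_window_mul_mem_Icc (n := n) j)
    rw [show j = (x + 1 : ℤ) + (window n j).1 * n by linarith, hw.apply_add_mul,
      add_sub_add_right_eq_sub]
    exact Finset.single_le_sum (f := fun x : Fin n => |w (x + 1) - (x + 1)|)
      (fun _ _ => abs_nonneg _) (Finset.mem_univ x)
  refine ((Set.finite_Icc (1 - 2 * B) n).prod (Set.finite_Icc 1 (n : ℤ))).subset ?_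
  rintro ⟨p, q⟩ ⟨hpq, hq1, hq2, hwpq⟩
  have hp := abs_le.1 (hB p)
  have hq := abs_le.1 (hB q)
  exact ⟨⟨by simp only at *; linarith, by simp only at *; linarith⟩, hq1, hq2⟩

lemma ellA_mul_sGen (hn : 2 ≤ n) (hw : IsPeriodic n w) {i : ℕ} (hi1 : 1 ≤ i)
    (hi2 : i ≤ n - 1) (hlt : w i < w (i + 1)) : ellA n (w * sGen n i) = ellA n w + 1 := by
  have : NeZero n := ⟨by omega⟩
  set u := sGen n i
  have hnot : ((i : ℤ), (i : ℤ) + 1) ∉ Prod.map u u ⁻¹' inversions n w := by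
    rintro ⟨h, -⟩
    simp only [Prod.map, sGen_apply_self hn, sGen_apply_add_one_self hn, u] at h
    omega
  have hinj : Function.Injective (Prod.map u u) := Prod.map_injective.2 ⟨u.injective, u.injective⟩
  have hrange : Set.range (Prod.map u u) = Set.univ :=
    (Prod.map_surjective.2 ⟨u.surjective, u.surjective⟩).range_eq
  rw [ellA_eq_ncard_inversions, inversions_mul_sGen hn hi1 hi2 hlt,
    Set.ncard_insert_of_notMem hnot (hw.finite_inversions.preimage hinj.injOn),
    Set.ncard_preimage_of_injective_subset_range hinj (hrange ▸ Set.subset_univ _),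
    ellA_eq_ncard_inversions]

lemma lt_of_ellA_mul_sGen (hn : 2 ≤ n) (hw : IsPeriodic n w) {i : ℕ} (hi1 : 1 ≤ i)
    (hi2 : i ≤ n - 1) (h : ellA n (w * sGen n i) = ellA n w + 1) : w i < w (i + 1) := by
  by_contra hge
  have hlt : (w * sGen n i) i < (w * sGen n i) (i + 1) := by
    rw [Equiv.Perm.mul_apply, Equiv.Perm.mul_apply, sGen_apply_self hn, sGen_apply_add_one_self hn]
    exact lt_of_le_of_ne (not_lt.1 hge) (w.injective.ne (by omega))
  have := (hw.mul (isPeriodic_sGen hn)).ellA_mul_sGen hn hi1 hi2 hlt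
  rw [mul_assoc, sGen_mul_self hn, mul_one] at this
  omega

lemma ellA_inv_le [NeZero n] (hw : IsPeriodic n w) : ellA n w⁻¹ ≤ ellA n w := by
  have hsub : ∀ j k : ℤ, w (w⁻¹ j - k * n) = j - k * n := fun j k => by
    rw [sub_eq_add_neg, ← neg_mul, hw.apply_add_mul, Equiv.Perm.coe_inv, Equiv.apply_symm_apply]
    ring
  let k : ℤ → ℤ := fun p => (window n (w⁻¹ p)).1
  refine Set.ncard_le_ncard_of_injOn (fun pq => (w⁻¹ pq.2 - k pq.1 * n, w⁻¹ pq.1 - k pq.1 * n))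
    ?_ ?_ hw.finite_inversions
  · rintro ⟨p, q⟩ ⟨hpq, hq1, hq2, hwpq⟩
    have hIcc := sub_fst_window_mul_mem_Icc (n := n) (w⁻¹ p)
    exact ⟨by simp only at *; linarith, hIcc.1, hIcc.2, by simp only [hsub]; linarith⟩
  · rintro ⟨p, q⟩ ⟨-, hq1, hq2, -⟩ ⟨p', q'⟩ ⟨-, hq1', hq2', -⟩ h
    simp only [Prod.mk.injEq] at h ⊢
    have hq := congrArg w h.1
    have hp := congrArg w h.2
    simp only [hsub] at hq hp
    have hk := eq_zero_of_mem_Icc_of_sub_eq ⟨hq1, hq2⟩ ⟨hq1', hq2'⟩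
      (show q - q' = (k p - k p') * n by linarith)
    constructor <;> nlinarith

lemma ellA_inv [NeZero n] (hw : IsPeriodic n w) : ellA n w⁻¹ = ellA n w :=
  le_antisymm hw.ellA_inv_le (by simpa using hw.inv.ellA_inv_le)

lemma ellA_sGen_mul (hn : 2 ≤ n) (hw : IsPeriodic n w) {i : ℕ} (hi1 : 1 ≤ i)
    (hi2 : i ≤ n - 1) (hlt : w⁻¹ i < w⁻¹ (i + 1)) : ellA n (sGen n i * w) = ellA n w + 1 := by
  have : NeZero n := ⟨by omega⟩
  calc ellA n (sGen n i * w) = ellA n (w⁻¹ * sGen n i) := by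
        rw [← ((isPeriodic_sGen hn).mul hw).ellA_inv, mul_inv_rev, sGen_inv hn]
    _ = ellA n w⁻¹ + 1 := hw.inv.ellA_mul_sGen hn hi1 hi2 hlt
    _ = ellA n w + 1 := by rw [hw.ellA_inv]

end IsPeriodic

end Length

/-- Counting: `d` maps `[x, hi]` injectively into `[lo, d x]`, and `[lo, x]` into `[d x, hi]`. -/
lemma val_add_val_of_strictAntiOn {n : ℕ} {lo hi : Fin n} {d : Fin n → Fin n}
    (hmaps : Set.MapsTo d (Set.Icc lo hi) (Set.Icc lo hi)) (hd : StrictAntiOn d (Set.Icc lo hi))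
    {x : Fin n} (hx : x ∈ Set.Icc lo hi) : (d x : ℕ) + x = lo + hi := by
  have hupper : (Finset.Icc x hi).card ≤ (Finset.Icc lo (d x)).card := by
    refine Finset.card_le_card_of_injOn d (fun y hy => ?_) (hd.injOn.mono fun y hy => ?_) <;>
      simp only [Finset.coe_Icc, Set.mem_Icc] at hy ⊢
    · have hy' : y ∈ Set.Icc lo hi := ⟨hx.1.trans hy.1, hy.2⟩
      exact ⟨(hmaps hy').1, hd.antitoneOn hx hy' hy.1⟩
    · exact ⟨hx.1.trans hy.1, hy.2⟩
  have hlower : (Finset.Icc lo x).card ≤ (Finset.Icc (d x) hi).card := by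
    refine Finset.card_le_card_of_injOn d (fun y hy => ?_) (hd.injOn.mono fun y hy => ?_) <;>
      simp only [Finset.coe_Icc, Set.mem_Icc] at hy ⊢
    · have hy' : y ∈ Set.Icc lo hi := ⟨hy.1, hy.2.trans hx.2⟩
      exact ⟨hd.antitoneOn hy' hx hy.2, (hmaps hy').2⟩
    · exact ⟨hy.1, hy.2.trans hx.2⟩
  have := Fin.le_iff_val_le_val.1 hx.1
  have := Fin.le_iff_val_le_val.1 hx.2
  have := Fin.le_iff_val_le_val.1 (hmaps hx).1
  have := Fin.le_iff_val_le_val.1 (hmaps hx).2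
  simp only [Fin.card_Icc] at hupper hlower
  omega

section LevelReflection

variable {n : ℕ} (a : Fin n → ℤ)

def levelSet (x : Fin n) : Finset (Fin n) := {y | a y = a x}

lemma mem_levelSet_self (x : Fin n) : x ∈ levelSet a x := by simp [levelSet]

def levelMin (x : Fin n) : Fin n := (levelSet a x).min' ⟨x, mem_levelSet_self a x⟩

def levelMax (x : Fin n) : Fin n := (levelSet a x).max' ⟨x, mem_levelSet_self a x⟩

lemma levelMin_le (x : Fin n) : levelMin a x ≤ x := Finset.min'_le _ _ (mem_levelSet_self a x)

lemma le_levelMax (x : Fin n) : x ≤ levelMax a x := Finset.le_max' _ _ (mem_levelSet_self a x)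

lemma levelMin_congr {x y : Fin n} (h : a y = a x) : levelMin a y = levelMin a x := by
  simp only [levelMin, levelSet, h]

lemma levelMax_congr {x y : Fin n} (h : a y = a x) : levelMax a y = levelMax a x := by
  simp only [levelMax, levelSet, h]

def levelReflection (x : Fin n) : Fin n :=
  ⟨levelMin a x + levelMax a x - x, by
    have := Fin.le_iff_val_le_val.1 (levelMin_le a x)
    have := (levelMax a x).isLt
    omega⟩

lemma val_levelReflection (x : Fin n) :
    (levelReflection a x : ℕ) = levelMin a x + levelMax a x - x := rfl

lemma levelReflection_lt_levelReflection {x y : Fin n} (hxy : a x = a y) (h : x < y) :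
    levelReflection a y < levelReflection a x := by
  have h1 := Fin.le_iff_val_le_val.1 (le_levelMax a y)
  rw [levelMax_congr a hxy.symm] at h1
  rw [Fin.lt_def, val_levelReflection, val_levelReflection, levelMin_congr a hxy.symm,
    levelMax_congr a hxy.symm]
  rw [Fin.lt_def] at h
  omega

variable {a} (ha : Monotone a)
include ha

lemma mem_levelSet_iff {x y : Fin n} : y ∈ levelSet a x ↔ levelMin a x ≤ y ∧ y ≤ levelMax a x := by
  refine ⟨fun h => ⟨Finset.min'_le _ _ h, Finset.le_max' _ _ h⟩, fun ⟨h1, h2⟩ => ?_⟩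
  have hmin := Finset.min'_mem (levelSet a x) ⟨x, mem_levelSet_self a x⟩
  have hmax := Finset.max'_mem (levelSet a x) ⟨x, mem_levelSet_self a x⟩
  simp only [levelSet, Finset.mem_filter, Finset.mem_univ, true_and] at hmin hmax ⊢
  exact le_antisymm (hmax ▸ ha h2) (hmin ▸ ha h1)

lemma apply_levelReflection (x : Fin n) : a (levelReflection a x) = a x := by
  have h1 := Fin.le_iff_val_le_val.1 (levelMin_le a x)
  have h2 := Fin.le_iff_val_le_val.1 (le_levelMax a x)
  have := (mem_levelSet_iff ha (x := x) (y := levelReflection a x)).2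
    ⟨Fin.le_iff_val_le_val.2 (by rw [val_levelReflection]; omega),
      Fin.le_iff_val_le_val.2 (by rw [val_levelReflection]; omega)⟩
  simpa [levelSet] using this

lemma levelReflection_involutive : Function.Involutive (levelReflection a) := fun x => by
  have h1 := Fin.le_iff_val_le_val.1 (le_levelMax a x)
  ext
  rw [val_levelReflection, levelMin_congr a (apply_levelReflection ha x),
    levelMax_congr a (apply_levelReflection ha x),
    val_levelReflection]
  omega

lemma eq_levelReflection {d : Fin n → Fin n} (hd : ∀ x, a (d x) = a x)
    (hanti : ∀ x y, a x = a y → x < y → d y < d x) : d = levelReflection a := by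
  funext x
  have hIcc : ∀ y, y ∈ Set.Icc (levelMin a x) (levelMax a x) ↔ a y = a x := fun y => by
    rw [Set.mem_Icc, ← mem_levelSet_iff ha]
    simp [levelSet]
  have hrefl := val_add_val_of_strictAntiOn (d := d)
    (fun y hy => (hIcc _).2 (by rw [hd, (hIcc y).1 hy]))
    (fun y hy z hz h => hanti y z (((hIcc y).1 hy).trans ((hIcc z).1 hz).symm) h)
    ((hIcc x).2 rfl)
  ext
  rw [val_levelReflection]
  omega

end LevelReflection

section Omega'

variable {n : ℕ} {w : Equiv.Perm ℤ}

lemma _root_.IsAffinePerm.isPeriodic (hw : IsAffinePerm n w) : IsPeriodic n w := hw.1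

lemma strictMonoOn_of_mem_Omega'Set (hn : 2 ≤ n) (hw : w ∈ Omega'Set n) :
    StrictMonoOn w (Set.Icc 1 n) := by
  refine strictMonoOn_of_lt_succ Set.ordConnected_Icc fun p _ hp hp' => ?_
  rw [Order.succ_eq_add_one] at hp' ⊢
  obtain ⟨hp1, -⟩ := hp
  obtain ⟨-, hp2⟩ := hp'
  lift p to ℕ using by omega
  exact hw.1.isPeriodic.lt_of_ellA_mul_sGen hn (by omega) (by omega)
    (hw.2.2 p (by omega) (by omega)).2

/-- `(τ_n w)² = 1` means `w⁻¹ = τ_n w τ_n`, so the left descent condition at `i` is the right one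
at `n - i`. -/
lemma mem_Omega'Set_of (hn : 2 ≤ n) (haff : IsAffinePerm n w)
    (htw : (tauN n * w) * (tauN n * w) = 1) (hmono : StrictMonoOn w (Set.Icc 1 n)) :
    w ∈ Omega'Set n := by
  have hinv : ∀ j, w⁻¹ j = n + 1 - w (n + 1 - j) := fun j => by
    have := congrArg (fun v : Equiv.Perm ℤ => v (w⁻¹ j)) htw
    simp only [Equiv.Perm.mul_apply, Equiv.Perm.one_apply, tauN_apply, Equiv.Perm.coe_inv,
      Equiv.apply_symm_apply] at this
    rw [Equiv.Perm.coe_inv]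
    linarith
  refine ⟨haff, htw, fun i hi1 hi2 => ⟨haff.isPeriodic.ellA_sGen_mul hn hi1 hi2 ?_,
    haff.isPeriodic.ellA_mul_sGen hn hi1 hi2 ?_⟩⟩
  · have := hmono (a := n - i) ⟨by omega, by omega⟩ ⟨by omega, by omega⟩
      (by omega : (n : ℤ) - i < n + 1 - i)
    rw [hinv, hinv, show (n : ℤ) + 1 - (i + 1) = n - i by ring]
    linarith
  · exact hmono ⟨by omega, by omega⟩ ⟨by omega, by omega⟩ (lt_add_one _)

variable [NeZero n]

lemma monotone_lam_of_mem_Omega'Set (hn : 2 ≤ n) (hw : w ∈ Omega'Set n) : Monotone (lam n w) :=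
  fun _ _ hxy => Prod.Lex.monotone_fst_ofLex
    ((strictMonoOn_Icc_iff.1 (strictMonoOn_of_mem_Omega'Set hn hw)).monotone hxy)

lemma residue_eq_of_mem_Omega'Set (hn : 2 ≤ n) (hw : w ∈ Omega'Set n) (x : Fin n) :
    residue n w x = (levelReflection (lam n w) x).rev := by
  have hmono := strictMonoOn_Icc_iff.1 (strictMonoOn_of_mem_Omega'Set hn hw)
  have htwist : twist n w = levelReflection (lam n w) :=
    eq_levelReflection (monotone_lam_of_mem_Omega'Set hn hw)
      ((hw.1.isPeriodic.tauN_mul_sq_eq_one_iff.1 hw.2.1).2) fun x y hxy h => by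
        rcases Prod.Lex.toLex_lt_toLex.1 (hmono h) with h' | ⟨-, h'⟩
        · exact absurd h' (by simp [hxy])
        · exact Fin.rev_lt_rev.2 h'
  rw [← htwist, twist, Fin.rev_rev]

end Omega'

section Construction

variable {n : ℕ} [NeZero n]

/-- The affine permutation with window `x + 1 ↦ a x * n + σ x + 1`. -/
def ofWindow (σ : Equiv.Perm (Fin n)) (a : Fin n → ℤ) : Equiv.Perm ℤ :=
  (window n).trans <| ((Equiv.prodComm _ _).trans <|
    (Equiv.prodShear σ fun x => Equiv.addRight (a x)).trans (Equiv.prodComm _ _)).trans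
    (window n).symm

variable (σ : Equiv.Perm (Fin n)) (a : Fin n → ℤ)

lemma ofWindow_window_symm (k : ℤ) (x : Fin n) :
    ofWindow σ a ((window n).symm (k, x)) = (window n).symm (k + a x, σ x) := by
  simp only [ofWindow, Equiv.trans_apply, Equiv.apply_symm_apply]
  rfl

lemma isPeriodic_ofWindow : IsPeriodic n (ofWindow σ a) := fun p => by
  obtain ⟨⟨k, x⟩, rfl⟩ := (window n).symm.surjective p
  have hshift : ∀ k x, (window n).symm (k, x) + n = (window n).symm (k + 1, x) := fun k x => by
    simp only [window_symm_apply]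
    ring
  rw [hshift, ofWindow_window_symm, ofWindow_window_symm, hshift, add_right_comm]

lemma window_ofWindow_apply (x : Fin n) : window n (ofWindow σ a (x + 1)) = (a x, σ x) := by
  rw [show (x + 1 : ℤ) = (window n).symm (0, x) by simp, ofWindow_window_symm, zero_add,
    Equiv.apply_symm_apply]

lemma lam_ofWindow : lam n (ofWindow σ a) = a := funext fun x => by
  have := window_apply_coe_add_one (ofWindow σ a) x
  rw [window_ofWindow_apply, Prod.mk.injEq] at this
  exact this.1.symm

lemma residue_ofWindow : residue n (ofWindow σ a) = σ := funext fun x => by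
  simp [residue, window_ofWindow_apply]

variable {a} (ha : Monotone a)

def ofLam : Equiv.Perm ℤ :=
  ofWindow ((levelReflection_involutive ha).toPerm _ |>.trans Fin.revPerm) a

lemma lam_ofLam : lam n (ofLam ha) = a := lam_ofWindow _ _

lemma residue_ofLam (x : Fin n) : residue n (ofLam ha) x = (levelReflection a x).rev := by
  simp [ofLam, residue_ofWindow]

lemma ofLam_mem_Omega'Set (hn : 2 ≤ n) (hsum : ∑ x, a x = 0) : ofLam ha ∈ Omega'Set n := by
  have hw : IsPeriodic n (ofLam ha) := isPeriodic_ofWindow _ _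
  have htwist : twist n (ofLam ha) = levelReflection a := funext fun x => by
    rw [twist, residue_ofLam, Fin.rev_rev]
  refine mem_Omega'Set_of hn (hw.isAffinePerm_iff.2 (by rwa [lam_ofLam]))
    (hw.tauN_mul_sq_eq_one_iff.2 ⟨?_, fun x => ?_⟩) (strictMonoOn_Icc_iff.2 fun x y hxy => ?_)
  · rw [htwist]
    exact levelReflection_involutive ha
  · rw [htwist, lam_ofLam]
    exact apply_levelReflection ha x
  · simp only [lam_ofLam, residue_ofLam, Prod.Lex.toLex_lt_toLex]
    rcases (ha hxy.le).lt_or_eq with h | h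
    · exact Or.inl h
    · exact Or.inr ⟨h, Fin.rev_lt_rev.2 (levelReflection_lt_levelReflection a h hxy)⟩

end Construction

end AffineSymmetricGroup

open AffineSymmetricGroup

/-- For every `n ≥ 2`, the map `w ↦ λ(w)` is a bijection from `Ω'_n` onto
the set of weakly increasing integer sequences of length `n` summing to zero. -/
theorem statement12 (n : ℕ) (hn : 2 ≤ n) :
    Set.BijOn (lam n) (Omega'Set n)
      {a : Fin n → ℤ | (∀ i j : Fin n, i ≤ j → a i ≤ a j) ∧ ∑ i, a i = 0} := by
  have : NeZero n := ⟨by omega⟩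
  refine ⟨fun w hw => ?_, fun w hw w' hw' h => ?_, fun a ⟨ha, hsum⟩ => ?_⟩
  · exact ⟨monotone_lam_of_mem_Omega'Set hn hw, hw.1.isPeriodic.isAffinePerm_iff.1 hw.1⟩
  · refine hw.1.isPeriodic.ext hw'.1.isPeriodic fun x => ?_
    rw [apply_coe_add_one, apply_coe_add_one, residue_eq_of_mem_Omega'Set hn hw,
      residue_eq_of_mem_Omega'Set hn hw', h]
  · exact ⟨ofLam ha, ofLam_mem_Omega'Set ha hn hsum, lam_ofLam ha⟩
end

section
/- For every integer n ≥ 2, the map w ↦ λ(w) is a bijection from Ω_n onto the set of weakly increasing antisymmetric integer sequences of length n, i.e. onto {a ∈ ℤⁿ : a_1 ≤ a_2 ≤ ⋯ ≤ a_n and a_i + a_{n+1−i} = 0 for all 1 ≤ i ≤ n}. -/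
open scoped Classical

/-!
An involution `w ∈ S̃_n` lies in `Ω_n` exactly when it is increasing on the window `[1, n]`:
`ℓ(w s_i) = ℓ(w) + 1` when `w i < w (i + 1)`, `ℓ(w s_i) = ℓ(w) - 1` otherwise, and
`ℓ(s_i w) = ℓ(w) + 1` when `w⁻¹ i < w⁻¹ (i + 1)`, the same condition since `w⁻¹ = w`.
Write `w j = n λ_j + ρ j` with `ρ j ∈ [1, n]`. Then `λ` is weakly increasing, and since `w` is an
involution commuting with `j ↦ j + n`, `ρ` is an involution of `[1, n]` with `λ ∘ ρ = -λ` that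
is increasing on each block `{λ = c}`. So `ρ` maps the block of `c` onto the block of `-c`; these
blocks have the same size, which is the antisymmetry of `λ`, and `ρ` is the translation between
them, so `w` is determined by `λ`. Conversely, for weakly increasing antisymmetric `a` the same
recipe `j ↦ n a_j + ρ j`, extended by `w (j + n) = w j + n`, defines an element of `Ω_n` with
`λ(w) = a`.
-/

namespace AffineInvolution

open Set

lemma eq_of_dvd_sub {m x y : ℤ} (h : m ∣ x - y) (h₁ : -m < x - y) (h₂ : x - y < m) : x = y :=
  sub_eq_zero.mp (Int.eq_zero_of_abs_lt_dvd h (abs_lt.mpr ⟨h₁, h₂⟩))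

lemma _root_.Set.ncard_eq_ncard_add_one_of_image_diff {α : Type*} {s t : Set α} {a : α}
    {f : α → α} (hf : f.Injective) (hs : s.Finite) (ha : a ∈ s) (himg : f '' (s \ {a}) = t) :
    s.ncard = t.ncard + 1 := by
  rw [← himg, ncard_image_of_injective _ hf, ncard_sdiff_singleton_add_one ha hs]

lemma _root_.StrictMonoOn.sub_le_sub_of_Icc {f : ℤ → ℤ} {p q : ℤ} (hf : StrictMonoOn f (Icc p q))
    {x y : ℤ} (hx : p ≤ x) (hxy : x ≤ y) (hy : y ≤ q) : y - x ≤ f y - f x := by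
  induction y, hxy using Int.leInduction with
  | base => simp
  | succ y hxy ih =>
    have := hf ⟨by omega, by omega⟩ ⟨by omega, hy⟩ (lt_add_one y)
    have := ih (by omega)
    omega

lemma _root_.StrictMonoOn.eq_sub_add_of_mapsTo {f : ℤ → ℤ} {p q p' : ℤ}
    (hf : StrictMonoOn f (Icc p q))
    (hmaps : MapsTo f (Icc p q) (Icc p' (p' + (q - p)))) {x : ℤ} (hx : x ∈ Icc p q) :
    f x = x - p + p' := by
  obtain ⟨hx₁, hx₂⟩ := hx
  have h₁ := hf.sub_le_sub_of_Icc le_rfl hx₁ hx₂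
  have h₂ := hf.sub_le_sub_of_Icc hx₁ hx₂ le_rfl
  have h₃ := (hmaps ⟨le_rfl, hx₁.trans hx₂⟩).1
  have h₄ := (hmaps ⟨hx₁.trans hx₂, le_rfl⟩).2
  omega

section Window

variable {n : ℕ}

lemma ediv_eq_of_mem_Icc {q r : ℤ} (hr : r ∈ Icc (1 : ℤ) n) : (n * q + r - 1) / n = q := by
  obtain ⟨hr₁, hr₂⟩ := hr
  rw [show n * q + r - 1 = r - 1 + q * n by ring, Int.add_mul_ediv_right _ _ (by omega),
    Int.ediv_eq_zero_of_lt (by omega) (by omega), zero_add]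

lemma sub_mul_ediv_mem_Icc (hn : 0 < n) (j : ℤ) : j - n * ((j - 1) / n) ∈ Icc (1 : ℤ) n := by
  have h₁ := Int.emod_nonneg (j - 1) (by omega : (n : ℤ) ≠ 0)
  have h₂ := Int.emod_lt_of_pos (j - 1) (by omega : (0 : ℤ) < n)
  have h₃ := Int.mul_ediv_add_emod (j - 1) n
  constructor <;> linarith

lemma exists_mem_Icc_add_mul (hn : 0 < n) (j : ℤ) :
    ∃ r ∈ Icc (1 : ℤ) n, ∃ k : ℤ, j = r + k * n :=
  ⟨_, sub_mul_ediv_mem_Icc hn j, (j - 1) / n, by ring⟩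

variable {f g : ℤ → ℤ}

lemma map_add_mul (hf : ∀ j, f (j + n) = f j + n) (j k : ℤ) : f (j + k * n) = f j + k * n := by
  have hper : Function.Periodic (fun j => f j - j) (n : ℤ) := fun j => by
    show f (j + n) - (j + n) = f j - j
    rw [hf]; ring
  have : f (j + k * n) - (j + k * n) = f j - j := hper.int_mul k j
  linarith

lemma eq_of_eqOn_Icc (hn : 0 < n) (hf : ∀ j, f (j + n) = f j + n) (hg : ∀ j, g (j + n) = g j + n)
    (hfg : EqOn f g (Icc 1 n)) : f = g := by
  funext j
  obtain ⟨r, hr, k, rfl⟩ := exists_mem_Icc_add_mul hn j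
  rw [map_add_mul hf, map_add_mul hg, hfg hr]

lemma involutive_of_Icc (hn : 0 < n) (hf : ∀ j, f (j + n) = f j + n)
    (hff : ∀ x ∈ Icc (1 : ℤ) n, f (f x) = x) : Function.Involutive f := by
  intro j
  obtain ⟨r, hr, k, rfl⟩ := exists_mem_Icc_add_mul hn j
  rw [map_add_mul hf, map_add_mul hf, hff r hr]

end Window

section SimpleReflection

variable {n i : ℕ} {x y : ℤ}

lemma not_dvd_one (hn : 2 ≤ n) : ¬ (n : ℤ) ∣ 1 := fun h => by
  have := Int.le_of_dvd one_pos h; omega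

lemma coe_sGen (hn : 2 ≤ n) : ⇑(sGen n i) = sFun n i := by
  rw [sGen, dif_neg (not_dvd_one hn)]; rfl

lemma sGen_mul_self (hn : 2 ≤ n) : sGen n i * sGen n i = 1 := by
  ext x
  simp [coe_sGen hn, sFun_invol n i (not_dvd_one hn) x]

lemma sFun_add (x : ℤ) : sFun n i (x + n) = sFun n i x + n := by
  simp only [sFun, show x + n - i = x - i + n by ring,
    show x + n - (i + 1) = x - (i + 1) + n by ring, dvd_add_self_right]
  split_ifs <;> ring

lemma sFun_of_dvd (h : (n : ℤ) ∣ x - i) : sFun n i x = x + 1 := by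
  rw [sFun, if_pos h]

lemma sFun_add_one_of_dvd (hn : ¬ (n : ℤ) ∣ 1) (h : (n : ℤ) ∣ x - i) : sFun n i (x + 1) = x := by
  have h₁ : ¬ (n : ℤ) ∣ x + 1 - i := fun h' => hn (by simpa using dvd_sub h' h)
  rw [sFun, if_neg h₁, if_pos (by simpa using h)]
  ring

lemma sFun_cross (hn : ¬ (n : ℤ) ∣ 1) (hxy : x < y) (h : sFun n i y ≤ sFun n i x) :
    y = x + 1 ∧ (n : ℤ) ∣ x - i := by
  have adj : ∀ a : ℤ, (n : ℤ) ∣ a → ¬ (n : ℤ) ∣ a + 1 := fun a ha ha₁ =>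
    hn (by simpa using dvd_sub ha₁ ha)
  unfold sFun at h
  split_ifs at h with hy₁ hx₁ hx₂ hy₂ hx₁ hx₂ hx₁ hx₂ <;> try omega
  · obtain rfl | rfl : y = x + 1 ∨ y = x + 2 := by omega
    · exact ⟨rfl, hx₁⟩
    · exact (adj _ hx₁ (by convert hy₂ using 1; ring)).elim
  · obtain rfl : y = x + 1 := by omega
    exact (hx₁ (by convert hy₂ using 1; ring)).elim
  · obtain rfl : y = x + 1 := by omega
    exact (hy₂ (by convert hx₁ using 1; ring)).elim

lemma sFun_mem_Icc (hi : 1 ≤ i) (hin : i < n) (hx : x ∈ Icc (1 : ℤ) n) :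
    sFun n i x ∈ Icc (1 : ℤ) n := by
  obtain ⟨hx₁, hx₂⟩ := hx
  unfold sFun
  split_ifs with h₁ h₂
  · have := eq_of_dvd_sub h₁ (by omega) (by omega); constructor <;> omega
  · have := eq_of_dvd_sub h₂ (by omega) (by omega); constructor <;> omega
  · exact ⟨hx₁, hx₂⟩

end SimpleReflection

section Length

variable {n i : ℕ} {w : Equiv.Perm ℤ}

def inversions (n : ℕ) (w : Equiv.Perm ℤ) : Set (ℤ × ℤ) :=
  {p | p.1 < p.2 ∧ 1 ≤ p.2 ∧ p.2 ≤ (n : ℤ) ∧ w p.2 < w p.1}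

lemma ellA_eq_ncard_inversions : ellA n w = (inversions n w).ncard := rfl

lemma inversions_finite (hn : 0 < n) (htr : ∀ j, w (j + n) = w j + n) :
    (inversions n w).Finite := by
  obtain ⟨M, hM⟩ := ((finite_Icc (1 : ℤ) n).image w).bddAbove
  obtain ⟨m, hm⟩ := ((finite_Icc (1 : ℤ) n).image w).bddBelow
  refine ((finite_Icc (m - M + 2) n).prod (finite_Icc (1 : ℤ) n)).subset ?_
  rintro ⟨a, b⟩ ⟨hab, hb₁, hb₂, hw⟩
  simp only at hab hb₁ hb₂ hw
  obtain ⟨r, hr, k, rfl⟩ := exists_mem_Icc_add_mul hn a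
  have h₁ : w r ≤ M := hM (mem_image_of_mem w hr)
  have h₂ : m ≤ w b := hm (mem_image_of_mem w ⟨hb₁, hb₂⟩)
  rw [map_add_mul htr] at hw
  simp only [mem_prod, mem_Icc] at hr ⊢
  omega

lemma mul_sGen_apply (hn : 2 ≤ n) (x : ℤ) : (w * sGen n i) x = w (sFun n i x) := by
  rw [Equiv.Perm.mul_apply, coe_sGen hn]

lemma sGen_mul_apply (hn : 2 ≤ n) (x : ℤ) : (sGen n i * w) x = sFun n i (w x) := by
  rw [Equiv.Perm.mul_apply, coe_sGen hn]

lemma mul_sGen_add (hn : 2 ≤ n) (htr : ∀ j, w (j + n) = w j + n) (j : ℤ) :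
    (w * sGen n i) (j + n) = (w * sGen n i) j + n := by
  rw [mul_sGen_apply hn, mul_sGen_apply hn, sFun_add, htr]

lemma mem_inversions_of_mem_inversions_mul_sGen (hn : 2 ≤ n) (hi : 1 ≤ i) (hin : i < n)
    {p : ℤ × ℤ} (hp : p ∈ inversions n (w * sGen n i) \ {((i : ℤ), (i : ℤ) + 1)}) :
    (sFun n i p.1, sFun n i p.2) ∈ inversions n w \ {((i : ℤ), (i : ℤ) + 1)} := by
  obtain ⟨a, b⟩ := p
  obtain ⟨⟨hab, hb₁, hb₂, hw⟩, hne⟩ := hp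
  simp only [mem_singleton_iff, Prod.mk.injEq, not_and] at hab hb₁ hb₂ hw hne
  rw [mul_sGen_apply hn, mul_sGen_apply hn] at hw
  have hs := sFun_invol n i (not_dvd_one hn)
  have hsb := sFun_mem_Icc hi hin ⟨hb₁, hb₂⟩
  refine ⟨⟨?_, hsb.1, hsb.2, hw⟩, ?_⟩
  · by_contra hle
    obtain ⟨rfl, hdvd⟩ := sFun_cross (not_dvd_one hn) hab (not_lt.mp hle)
    have := eq_of_dvd_sub hdvd (by omega) (by omega)
    exact hne this (by omega)
  · simp only [mem_singleton_iff, Prod.mk.injEq, not_and]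
    intro h₁ h₂
    have ha : a = i + 1 := by rw [← hs a, h₁, sFun_of_dvd (by simp)]
    have hb : b = i := by rw [← hs b, h₂, sFun_add_one_of_dvd (not_dvd_one hn) (by simp)]
    omega

lemma ellA_mul_sGen_of_lt (hn : 2 ≤ n) (hi : 1 ≤ i) (hin : i < n)
    (htr : ∀ j, w (j + n) = w j + n) (hlt : w i < w (i + 1)) :
    ellA n (w * sGen n i) = ellA n w + 1 := by
  have hs := sFun_invol n i (not_dvd_one hn)
  have hsi : sFun n i i = i + 1 := sFun_of_dvd (by simp)
  have hsi' : sFun n i (i + 1) = i := sFun_add_one_of_dvd (not_dvd_one hn) (by simp)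
  set e : ℤ × ℤ → ℤ × ℤ := fun p => (sFun n i p.1, sFun n i p.2)
  have he : e.Injective := fun p q h => by
    simp only [e, Prod.mk.injEq] at h
    exact Prod.ext (hs.injective h.1) (hs.injective h.2)
  rw [ellA_eq_ncard_inversions, ellA_eq_ncard_inversions]
  refine Set.ncard_eq_ncard_add_one_of_image_diff (a := ((i : ℤ), (i : ℤ) + 1)) he
    (inversions_finite (by omega) (mul_sGen_add hn htr)) ?_ ?_
  · refine ⟨by simp, by simp, by simp only; omega, ?_⟩
    simpa [mul_sGen_apply hn, hsi, hsi'] using hlt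
  · refine Subset.antisymm ?_ fun q hq => ?_
    · rintro _ ⟨p, hp, rfl⟩
      exact (mem_inversions_of_mem_inversions_mul_sGen hn hi hin hp).1
    · have hq' : q ∈ inversions n (w * sGen n i * sGen n i) \ {((i : ℤ), (i : ℤ) + 1)} := by
        refine ⟨by rwa [mul_assoc, sGen_mul_self hn, mul_one], ?_⟩
        rintro rfl
        exact absurd hq.2.2.2 (not_lt.mpr hlt.le)
      exact ⟨_, mem_inversions_of_mem_inversions_mul_sGen hn hi hin hq', by simp [e, hs _]⟩

lemma ellA_mul_sGen_of_gt (hn : 2 ≤ n) (hi : 1 ≤ i) (hin : i < n)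
    (htr : ∀ j, w (j + n) = w j + n) (hgt : w (i + 1) < w i) :
    ellA n w = ellA n (w * sGen n i) + 1 := by
  have h := ellA_mul_sGen_of_lt hn hi hin (mul_sGen_add hn htr) (w := w * sGen n i)
    (by rwa [mul_sGen_apply hn, mul_sGen_apply hn, sFun_of_dvd (by simp),
      sFun_add_one_of_dvd (not_dvd_one hn) (by simp)])
  rwa [mul_assoc, sGen_mul_self hn, mul_one] at h

/-- The pairs on which `s_i` reverses the order of the values of `w` are the translates of
`(u, v)`, and only one translate has its second entry in `[1, n]`. -/
lemma inversions_sGen_mul_sdiff (hn : 2 ≤ n) (htr : ∀ j, w (j + n) = w j + n) {u v r k : ℤ}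
    (hu : w u = i) (hv : w v = i + 1) (huv : u < v) (hr : r ∈ Icc (1 : ℤ) n)
    (hvr : v = r + k * n) :
    inversions n (sGen n i * w) \ {(u - k * n, v - k * n)} =
      inversions n w \ {(u - k * n, v - k * n)} := by
  obtain ⟨hr₁, hr₂⟩ := hr
  have hpair : ∀ a b, w b = w a + 1 → (n : ℤ) ∣ w a - i →
      ∃ c : ℤ, a = u + c * n ∧ b = v + c * n := by
    rintro a b hab ⟨c, hc⟩
    exact ⟨c, w.injective (by rw [map_add_mul htr, hu]; linarith),
      w.injective (by rw [map_add_mul htr, hv]; linarith)⟩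
  have hP : ∀ a b, b ∈ Icc (1 : ℤ) n → w b = w a + 1 → (n : ℤ) ∣ w a - i →
      (a, b) = (u - k * n, v - k * n) := by
    rintro a b ⟨hb₁, hb₂⟩ hab hd
    obtain ⟨c, ha, hb⟩ := hpair a b hab hd
    have hbr : b = r :=
      eq_of_dvd_sub (m := n) ⟨c + k, by rw [hb, hvr]; ring⟩ (by omega) (by omega)
    obtain hck | hn0 := mul_eq_zero.mp (show (c + k) * n = 0 by linarith)
    · obtain rfl : c = -k := by linarith
      simp only [ha, hb, Prod.mk.injEq]
      constructor <;> ring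
    · omega
  ext ⟨a, b⟩
  simp only [inversions, mem_sdiff, mem_ofPred_eq, mem_singleton_iff, sGen_mul_apply hn]
  refine and_congr_left fun hne => and_congr_right fun hab => and_congr_right fun hb₁ =>
    and_congr_right fun hb₂ => ⟨fun h => ?_, fun h => ?_⟩
  · by_contra hle
    obtain ⟨hba, hd⟩ := sFun_cross (not_dvd_one hn) (lt_of_le_of_ne (not_lt.mp hle)
      (fun h' => by have := w.injective h'; omega)) h.le
    exact hne (hP a b ⟨hb₁, hb₂⟩ hba hd)
  · by_contra hle
    obtain ⟨hab', hd⟩ := sFun_cross (not_dvd_one hn) h (not_lt.mp hle)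
    obtain ⟨c, hb, ha⟩ := hpair b a hab' hd
    omega

lemma ellA_sGen_mul_of_lt (hn : 2 ≤ n) (htr : ∀ j, w (j + n) = w j + n) {u v : ℤ}
    (hu : w u = i) (hv : w v = i + 1) (huv : u < v) :
    ellA n (sGen n i * w) = ellA n w + 1 := by
  obtain ⟨r, hr, k, hvr⟩ := exists_mem_Icc_add_mul (n := n) (by omega) v
  have hshift : ∀ x, w (x - k * n) = w x - k * n := fun x => by
    rw [sub_eq_add_neg, ← neg_mul, map_add_mul htr]; ring
  have hPu : w (u - k * n) = i - k * n := by rw [hshift, hu]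
  have hPv : w (v - k * n) = i - k * n + 1 := by rw [hshift, hv]; ring
  have hdvd : (n : ℤ) ∣ (i - k * n) - i := ⟨-k, by ring⟩
  have hPmem : (u - k * n, v - k * n) ∈ inversions n (sGen n i * w) := by
    obtain ⟨hr₁, hr₂⟩ := hr
    refine ⟨by simp only; omega, by simp only; omega, by simp only; omega, ?_⟩
    simp only [sGen_mul_apply hn, hPu, hPv, sFun_of_dvd hdvd,
      sFun_add_one_of_dvd (not_dvd_one hn) hdvd]
    omega
  have hPnot : (u - k * n, v - k * n) ∉ inversions n w := fun h => by
    have := h.2.2.2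
    simp only [hPu, hPv] at this
    omega
  rw [ellA_eq_ncard_inversions, ellA_eq_ncard_inversions]
  refine Set.ncard_eq_ncard_add_one_of_image_diff Function.injective_id
    (inversions_finite (by omega) fun j => ?_) hPmem ?_
  · rw [sGen_mul_apply hn, sGen_mul_apply hn, htr, sFun_add]
  · rw [image_id, inversions_sGen_mul_sdiff hn htr hu hv huv hr hvr,
      sdiff_singleton_eq_self hPnot]

end Length

lemma apply_apply_of_mul_self {w : Equiv.Perm ℤ} (hw : w * w = 1) (x : ℤ) : w (w x) = x := by
  simpa using congr($hw x)

lemma mem_OmegaSet_iff {n : ℕ} (hn : 2 ≤ n) {w : Equiv.Perm ℤ} :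
    w ∈ OmegaSet n ↔ IsAffinePerm n w ∧ w * w = 1 ∧ StrictMonoOn w (Icc 1 n) := by
  refine and_congr_right fun haff => and_congr_right fun hinv =>
    ⟨fun h => strictMonoOn_of_lt_add_one ordConnected_Icc fun x _ hx hx₁ => ?_,
      fun hmono i hi hin => ?_⟩
  · obtain ⟨i, rfl⟩ : ∃ i : ℕ, x = i := ⟨x.toNat, by simp only [mem_Icc] at hx; omega⟩
    simp only [mem_Icc] at hx hx₁
    by_contra hle
    have hgt : w (i + 1) < w i :=
      lt_of_le_of_ne (not_lt.mp hle) fun h' => by have := w.injective h'; omega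
    have := ellA_mul_sGen_of_gt hn (by omega) (by omega) haff.1 hgt
    have := (h i (by omega) (by omega)).2
    omega
  · have hlt : w i < w (i + 1) := hmono ⟨by omega, by omega⟩ ⟨by omega, by omega⟩ (by omega)
    exact ⟨ellA_sGen_mul_of_lt hn haff.1 (apply_apply_of_mul_self hinv i)
      (apply_apply_of_mul_self hinv (i + 1)) hlt,
      ellA_mul_sGen_of_lt hn (by omega) (by omega) haff.1 hlt⟩

section Blocks

variable {n : ℕ} {b : ℤ → ℤ} {c x y : ℤ}

noncomputable def countLE (n : ℕ) (b : ℤ → ℤ) (c : ℤ) : ℤ :=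
  ((Finset.Icc (1 : ℤ) n).filter (b · ≤ c)).card

lemma countLE_nonneg : 0 ≤ countLE n b c := Nat.cast_nonneg _

lemma countLE_le : countLE n b c ≤ n := by
  have := Finset.card_filter_le (Finset.Icc (1 : ℤ) n) (b · ≤ c)
  rw [Int.card_Icc] at this
  unfold countLE
  omega

lemma le_iff_le_countLE (hb : MonotoneOn b (Icc 1 n)) (hx : x ∈ Icc (1 : ℤ) n) :
    b x ≤ c ↔ x ≤ countLE n b c := by
  obtain ⟨hx₁, hx₂⟩ := hx
  unfold countLE
  constructor
  · intro hc
    have hsub : Finset.Icc 1 x ⊆ (Finset.Icc (1 : ℤ) n).filter (b · ≤ c) := fun y hy => by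
      simp only [Finset.mem_Icc, Finset.mem_filter] at hy ⊢
      exact ⟨⟨hy.1, by omega⟩, (hb ⟨hy.1, by omega⟩ ⟨hx₁, hx₂⟩ hy.2).trans hc⟩
    have := Finset.card_le_card hsub
    rw [Int.card_Icc] at this
    omega
  · intro hle
    by_contra hc
    have hsub : (Finset.Icc (1 : ℤ) n).filter (b · ≤ c) ⊆ Finset.Icc 1 (x - 1) := fun y hy => by
      simp only [Finset.mem_Icc, Finset.mem_filter] at hy ⊢
      exact ⟨hy.1.1, not_lt.mp fun hxy => hc ((hb ⟨hx₁, hx₂⟩ hy.1 (by omega)).trans hy.2)⟩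
    have := Finset.card_le_card hsub
    rw [Int.card_Icc] at this
    omega

lemma mem_Icc_countLE_iff (hb : MonotoneOn b (Icc 1 n)) :
    y ∈ Icc (countLE n b (c - 1) + 1) (countLE n b c) ↔ y ∈ Icc (1 : ℤ) n ∧ b y = c := by
  have h₀ : 0 ≤ countLE n b (c - 1) := countLE_nonneg
  have h₁ : countLE n b c ≤ n := countLE_le
  constructor
  · rintro ⟨hy₁, hy₂⟩
    have hy : y ∈ Icc (1 : ℤ) n := ⟨by omega, by omega⟩
    have := (le_iff_le_countLE hb hy).mpr hy₂
    have := (le_iff_le_countLE (c := c - 1) hb hy).not.mpr (by omega)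
    exact ⟨hy, by omega⟩
  · rintro ⟨hy, rfl⟩
    have := (le_iff_le_countLE hb hy).mp le_rfl
    have := (le_iff_le_countLE (c := b y - 1) hb hy).not.mp (by omega)
    exact ⟨by omega, by omega⟩

lemma countLE_add_countLE_neg {σ : ℤ → ℤ} (hσ : MapsTo σ (Icc 1 n) (Icc 1 n))
    (hσσ : ∀ x ∈ Icc (1 : ℤ) n, σ (σ x) = x) (hbσ : ∀ x ∈ Icc (1 : ℤ) n, b (σ x) = -b x)
    (c : ℤ) : countLE n b c + countLE n b (-c - 1) = n := by
  have hcard : ((Finset.Icc (1 : ℤ) n).filter (b · ≤ c)).card =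
      ((Finset.Icc (1 : ℤ) n).filter (¬ b · ≤ -c - 1)).card := by
    refine Finset.card_nbij' σ σ (fun x hx => ?_) (fun x hx => ?_) (fun x hx => hσσ x ?_)
      (fun x hx => hσσ x ?_) <;>
    simp only [Finset.coe_filter, Finset.mem_Icc, mem_ofPred_eq] at hx ⊢ <;>
    first
    | exact hx.1
    | exact ⟨hσ hx.1, by rw [hbσ x hx.1]; omega⟩
  have := Finset.card_filter_add_card_filter_not (s := Finset.Icc (1 : ℤ) n) (p := (b · ≤ -c - 1))
  rw [Int.card_Icc] at this
  unfold countLE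
  omega

-- `hsum` says `#{b ≤ c} = #{b ≥ -c}` on `[1, n]`, the counting form of antisymmetry.
variable (hb : MonotoneOn b (Icc 1 n)) (hsum : ∀ c, countLE n b c + countLE n b (-c - 1) = n)
include hb hsum

omit hb in
lemma countLE_sub_one_add_countLE_neg (c : ℤ) : countLE n b (c - 1) + countLE n b (-c) = n := by
  have := hsum (c - 1)
  rwa [show -(c - 1) - 1 = -c by ring] at this

lemma apply_reflect_eq_neg (hx : x ∈ Icc (1 : ℤ) n) : b (n + 1 - x) = -b x := by
  have hx' : n + 1 - x ∈ Icc (1 : ℤ) n := ⟨by linarith [hx.2], by linarith [hx.1]⟩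
  have h₁ := hsum (b x)
  have h₂ := countLE_sub_one_add_countLE_neg hsum (b x)
  have h₃ := (le_iff_le_countLE hb hx).mp le_rfl
  have h₄ := (le_iff_le_countLE (c := b x - 1) hb hx).not.mp (by omega)
  have h₅ := le_iff_le_countLE (c := -b x) hb hx'
  have h₆ := le_iff_le_countLE (c := -b x - 1) hb hx'
  omega

/-- The order-preserving bijection from the block of `b x` onto the block of `-b x`. -/
noncomputable def blockRefl (n : ℕ) (b : ℤ → ℤ) (x : ℤ) : ℤ :=
  x - countLE n b (b x - 1) + countLE n b (-b x - 1)

lemma blockRefl_mem (hx : x ∈ Icc (1 : ℤ) n) :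
    blockRefl n b x ∈ Icc (1 : ℤ) n ∧ b (blockRefl n b x) = -b x := by
  refine (mem_Icc_countLE_iff hb).mp ?_
  have h₁ := hsum (b x)
  have h₂ := countLE_sub_one_add_countLE_neg hsum (b x)
  have := (mem_Icc_countLE_iff hb).mpr ⟨hx, rfl⟩
  simp only [blockRefl, mem_Icc] at this ⊢
  omega

lemma blockRefl_blockRefl (hx : x ∈ Icc (1 : ℤ) n) : blockRefl n b (blockRefl n b x) = x := by
  have h := (blockRefl_mem hb hsum hx).2
  set y := blockRefl n b x with hy
  show y - countLE n b (b y - 1) + countLE n b (-b y - 1) = x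
  rw [h, neg_neg, hy, blockRefl]
  ring

lemma eq_blockRefl {R : ℤ → ℤ}
    (hR : ∀ x ∈ Icc (1 : ℤ) n, R x ∈ Icc (1 : ℤ) n ∧ b (R x) = -b x)
    (hRmono : ∀ x ∈ Icc (1 : ℤ) n, ∀ y ∈ Icc (1 : ℤ) n, x < y → b x = b y → R x < R y)
    (hx : x ∈ Icc (1 : ℤ) n) : R x = blockRefl n b x := by
  have hblock := fun y => mem_Icc_countLE_iff (y := y) (c := b x) hb
  have h₁ := hsum (b x)
  have h₂ := countLE_sub_one_add_countLE_neg hsum (b x)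
  have hmono : StrictMonoOn R (Icc (countLE n b (b x - 1) + 1) (countLE n b (b x))) :=
    fun y hy z hz hyz => by
      obtain ⟨hy, hby⟩ := (hblock y).mp hy
      obtain ⟨hz, hbz⟩ := (hblock z).mp hz
      exact hRmono y hy z hz hyz (hby.trans hbz.symm)
  have hmaps : MapsTo R (Icc (countLE n b (b x - 1) + 1) (countLE n b (b x)))
      (Icc (countLE n b (-b x - 1) + 1) (countLE n b (-b x - 1) + 1 +
        (countLE n b (b x) - (countLE n b (b x - 1) + 1)))) := fun y hy => by
    obtain ⟨hy, hby⟩ := (hblock y).mp hy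
    have := (mem_Icc_countLE_iff hb).mpr ⟨(hR y hy).1, (hR y hy).2.trans (congrArg _ hby)⟩
    simp only [mem_Icc] at this ⊢
    omega
  rw [hmono.eq_sub_add_of_mapsTo hmaps ((hblock x).mpr ⟨hx, rfl⟩), blockRefl]
  ring

end Blocks

section Extension

variable {n : ℕ} {f : ℤ → ℤ} {j : ℤ}

def affExtend (n : ℕ) (f : ℤ → ℤ) (j : ℤ) : ℤ := f (j - n * ((j - 1) / n)) + n * ((j - 1) / n)

lemma affExtend_of_mem (hj : j ∈ Icc (1 : ℤ) n) : affExtend n f j = f j := by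
  have h : (j - 1) / n = 0 := by simpa using ediv_eq_of_mem_Icc (q := 0) hj
  simp [affExtend, h]

lemma affExtend_add (j : ℤ) : affExtend n f (j + n) = affExtend n f j + n := by
  rcases Nat.eq_zero_or_pos n with rfl | hn
  · simp
  have h : (j + n - 1) / n = (j - 1) / n + 1 := by
    rw [show j + n - 1 = j - 1 + 1 * n by ring, Int.add_mul_ediv_right _ _ (by omega)]
  simp only [affExtend, h]
  ring_nf

end Extension

section Construction

variable {n : ℕ} {b : ℤ → ℤ} {x : ℤ}

noncomputable def omegaFun (n : ℕ) (b : ℤ → ℤ) : ℤ → ℤ :=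
  affExtend n fun x => n * b x + blockRefl n b x

lemma omegaFun_add (j : ℤ) : omegaFun n b (j + n) = omegaFun n b j + n := affExtend_add j

lemma omegaFun_of_mem (hx : x ∈ Icc (1 : ℤ) n) : omegaFun n b x = n * b x + blockRefl n b x :=
  affExtend_of_mem hx

variable (hb : MonotoneOn b (Icc 1 n)) (hsum : ∀ c, countLE n b c + countLE n b (-c - 1) = n)
include hb hsum

lemma omegaFun_involutive (hn : 0 < n) : Function.Involutive (omegaFun n b) := by
  refine involutive_of_Icc hn omegaFun_add fun x hx => ?_
  obtain ⟨hy, hby⟩ := blockRefl_mem hb hsum hx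
  rw [omegaFun_of_mem hx, show n * b x + blockRefl n b x = blockRefl n b x + b x * n by ring,
    map_add_mul omegaFun_add, omegaFun_of_mem hy, hby, blockRefl_blockRefl hb hsum hx]
  ring

lemma strictMonoOn_omegaFun : StrictMonoOn (omegaFun n b) (Icc 1 n) := by
  intro x hx y hy hxy
  rw [omegaFun_of_mem hx, omegaFun_of_mem hy]
  obtain ⟨⟨hx₁, hx₂⟩, -⟩ := blockRefl_mem hb hsum hx
  obtain ⟨⟨hy₁, hy₂⟩, -⟩ := blockRefl_mem hb hsum hy
  rcases (hb hx hy hxy.le).eq_or_lt with hbxy | hbxy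
  · simp only [blockRefl, hbxy]
    omega
  · have := mul_le_mul_of_nonneg_left (show b x + 1 ≤ b y by omega) (Int.natCast_nonneg n)
    linarith

lemma sum_omegaFun :
    ∑ x ∈ Finset.Icc (1 : ℤ) n, omegaFun n b x = ∑ x ∈ Finset.Icc (1 : ℤ) n, x := by
  rw [← sub_eq_zero, ← Finset.sum_sub_distrib]
  -- `blockRefl` pairs up the terms `omegaFun x - x` into cancelling pairs
  refine Finset.sum_involution (fun x _ => blockRefl n b x) (fun x hx => ?_)
    (fun x hx hne heq => hne ?_) (fun x hx => ?_) (fun x hx => ?_) <;>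
    rw [Finset.mem_Icc, ← mem_Icc] at hx <;>
    obtain ⟨hy, hby⟩ := blockRefl_mem hb hsum hx
  · rw [omegaFun_of_mem hx, omegaFun_of_mem hy, hby, blockRefl_blockRefl hb hsum hx]
    ring
  · have hbx : b x = 0 := by rw [heq] at hby; omega
    rw [omegaFun_of_mem hx, hbx, heq]
    ring
  · exact Finset.mem_Icc.mpr hy
  · exact blockRefl_blockRefl hb hsum hx

lemma omegaFun_sub_one_ediv (hx : x ∈ Icc (1 : ℤ) n) : (omegaFun n b x - 1) / n = b x := by
  rw [omegaFun_of_mem hx, ediv_eq_of_mem_Icc (blockRefl_mem hb hsum hx).1]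

end Construction

section Residue

variable {n : ℕ} {w : Equiv.Perm ℤ} {b : ℤ → ℤ} {x : ℤ} (hn : 0 < n)
  (hb : ∀ x ∈ Icc (1 : ℤ) n, b x = (w x - 1) / n)
include hn hb

lemma sub_mul_mem_Icc (hx : x ∈ Icc (1 : ℤ) n) : w x - n * b x ∈ Icc (1 : ℤ) n := by
  rw [hb x hx]
  exact sub_mul_ediv_mem_Icc hn (w x)

lemma monotoneOn_of_strictMonoOn (hmono : StrictMonoOn w (Icc 1 n)) : MonotoneOn b (Icc 1 n) :=
  fun x hx y hy hxy => by
    rw [hb x hx, hb y hy]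
    exact Int.ediv_le_ediv (by omega) (by linarith [hmono.monotoneOn hx hy hxy])

variable (htr : ∀ j, w (j + n) = w j + n) (hinv : ∀ x, w (w x) = x)
include htr hinv

omit hn hb in
lemma apply_residue : w (w x - n * b x) = n * -b x + x := by
  rw [show w x - n * b x = w x + -b x * n by ring, map_add_mul htr, hinv]
  ring

lemma apply_residue_eq_neg (hx : x ∈ Icc (1 : ℤ) n) : b (w x - n * b x) = -b x := by
  rw [hb _ (sub_mul_mem_Icc hn hb hx), apply_residue htr hinv, ediv_eq_of_mem_Icc hx]

lemma residue_residue (hx : x ∈ Icc (1 : ℤ) n) :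
    w (w x - n * b x) - n * b (w x - n * b x) = x := by
  rw [apply_residue htr hinv, apply_residue_eq_neg hn hb htr hinv hx]
  ring

lemma countLE_add_countLE_neg_of_involutive (c : ℤ) :
    countLE n b c + countLE n b (-c - 1) = n :=
  countLE_add_countLE_neg (fun _ hx => sub_mul_mem_Icc hn hb hx)
    (fun _ hx => residue_residue hn hb htr hinv hx)
    (fun _ hx => apply_residue_eq_neg hn hb htr hinv hx) c

lemma coe_eq_omegaFun_of_strictMonoOn (hmono : StrictMonoOn w (Icc 1 n)) : ⇑w = omegaFun n b := by
  have hbm := monotoneOn_of_strictMonoOn hn hb hmono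
  have hsum := countLE_add_countLE_neg_of_involutive hn hb htr hinv
  refine eq_of_eqOn_Icc hn htr omegaFun_add fun x hx => ?_
  rw [omegaFun_of_mem hx, ← eq_blockRefl hbm hsum (R := fun x => w x - n * b x)
    (fun y hy => ⟨sub_mul_mem_Icc hn hb hy, apply_residue_eq_neg hn hb htr hinv hy⟩)
    (fun y hy z hz hyz hbyz => by rw [hbyz]; linarith [hmono hy hz hyz]) hx]
  ring

end Residue

section Sequence

variable {n : ℕ} {a : Fin n → ℤ} {x : ℤ}

def seqAt (a : Fin n → ℤ) (j : ℤ) : ℤ :=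
  if h : (j - 1).toNat < n then a ⟨(j - 1).toNat, h⟩ else 0

lemma seqAt_of_mem (hx : x ∈ Icc (1 : ℤ) n) :
    seqAt a x = a ⟨(x - 1).toNat, by have := hx.1; have := hx.2; omega⟩ :=
  dif_pos _

lemma seqAt_natCast_add_one (i : Fin n) : seqAt a ((i : ℕ) + 1) = a i := by
  simp [seqAt]

lemma natCast_add_one_mem_Icc (i : Fin n) : ((i : ℕ) + 1 : ℤ) ∈ Icc (1 : ℤ) n := by
  have := i.isLt
  constructor <;> omega

lemma monotoneOn_seqAt_iff : MonotoneOn (seqAt a) (Icc 1 n) ↔ Monotone a := by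
  constructor
  · intro h i j hij
    rw [← seqAt_natCast_add_one (a := a) i, ← seqAt_natCast_add_one (a := a) j]
    have hij' : (i : ℕ) ≤ j := hij
    exact h (natCast_add_one_mem_Icc i) (natCast_add_one_mem_Icc j) (by omega)
  · intro h x hx y hy hxy
    rw [seqAt_of_mem hx, seqAt_of_mem hy]
    exact h (Fin.mk_le_mk.mpr (by omega))

lemma seqAt_reflect_iff :
    (∀ x ∈ Icc (1 : ℤ) n, seqAt a (n + 1 - x) = -seqAt a x) ↔ ∀ i : Fin n, a i + a i.rev = 0 := by
  constructor
  · intro h i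
    have := h _ (natCast_add_one_mem_Icc i)
    have hrev : (n : ℤ) + 1 - ((i : ℕ) + 1) = ((i.rev : ℕ) : ℤ) + 1 := by
      have := i.isLt
      simp only [Fin.val_rev]
      omega
    rw [hrev, seqAt_natCast_add_one, seqAt_natCast_add_one] at this
    omega
  · intro h x hx
    have hx' : n + 1 - x ∈ Icc (1 : ℤ) n := ⟨by linarith [hx.2], by linarith [hx.1]⟩
    rw [seqAt_of_mem hx, seqAt_of_mem hx']
    obtain ⟨hx₁, hx₂⟩ := hx
    have := h ⟨(x - 1).toNat, by omega⟩
    rw [show (⟨(n + 1 - x - 1).toNat, _⟩ : Fin n) = Fin.rev ⟨(x - 1).toNat, by omega⟩ from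
      Fin.ext (by simp only [Fin.val_rev]; omega)]
    omega

lemma seqAt_lam {w : Equiv.Perm ℤ} (hx : x ∈ Icc (1 : ℤ) n) :
    seqAt (lam n w) x = (w x - 1) / n := by
  rw [seqAt_of_mem hx, lam, Int.fdiv_eq_ediv_of_nonneg _ (Int.natCast_nonneg n)]
  have := hx.1
  congr
  simp only
  omega

end Sequence

section OmegaSet

variable {n : ℕ} {w : Equiv.Perm ℤ}

lemma OmegaSet.monotoneOn_seqAt_lam (hn : 2 ≤ n) (hw : w ∈ OmegaSet n) :
    MonotoneOn (seqAt (lam n w)) (Icc 1 n) :=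
  monotoneOn_of_strictMonoOn (by omega) (fun _ hx => seqAt_lam hx)
    ((mem_OmegaSet_iff hn).mp hw).2.2

lemma OmegaSet.countLE_add_countLE_neg (hn : 2 ≤ n) (hw : w ∈ OmegaSet n) (c : ℤ) :
    countLE n (seqAt (lam n w)) c + countLE n (seqAt (lam n w)) (-c - 1) = n := by
  obtain ⟨⟨htr, -⟩, hinv, -⟩ := (mem_OmegaSet_iff hn).mp hw
  exact countLE_add_countLE_neg_of_involutive (by omega) (fun _ hx => seqAt_lam hx) htr
    (apply_apply_of_mul_self hinv) c

lemma OmegaSet.coe_eq_omegaFun (hn : 2 ≤ n) (hw : w ∈ OmegaSet n) :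
    ⇑w = omegaFun n (seqAt (lam n w)) := by
  obtain ⟨⟨htr, -⟩, hinv, hmono⟩ := (mem_OmegaSet_iff hn).mp hw
  exact coe_eq_omegaFun_of_strictMonoOn (by omega) (fun _ hx => seqAt_lam hx) htr
    (apply_apply_of_mul_self hinv) hmono

lemma exists_mem_OmegaSet_lam_eq (hn : 2 ≤ n) {a : Fin n → ℤ} (ha : Monotone a)
    (ha' : ∀ i, a i + a i.rev = 0) : ∃ w ∈ OmegaSet n, lam n w = a := by
  have hb := monotoneOn_seqAt_iff.mpr ha
  have hsum : ∀ c, countLE n (seqAt a) c + countLE n (seqAt a) (-c - 1) = n :=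
    countLE_add_countLE_neg (σ := fun x => n + 1 - x)
      (fun x hx => ⟨by linarith [hx.2], by linarith [hx.1]⟩) (fun x _ => by ring)
      (seqAt_reflect_iff.mpr ha')
  have hinv := omegaFun_involutive hb hsum (by omega)
  refine ⟨hinv.toPerm _, (mem_OmegaSet_iff hn).mpr ⟨⟨omegaFun_add, sum_omegaFun hb hsum⟩, ?_,
    strictMonoOn_omegaFun hb hsum⟩, funext fun i => ?_⟩
  · ext x
    simp [hinv x]
  · rw [lam, Function.Involutive.coe_toPerm, Int.fdiv_eq_ediv_of_nonneg _ (Int.natCast_nonneg n),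
      omegaFun_sub_one_ediv hb hsum (natCast_add_one_mem_Icc i), seqAt_natCast_add_one]

end OmegaSet

end AffineInvolution

open AffineInvolution

/-- For every `n ≥ 2`, the map `w ↦ λ(w)` is a bijection from `Ω_n` onto the
set of weakly increasing antisymmetric integer sequences of length `n` (antisymmetric meaning
`a_i + a_{n+1−i} = 0`, i.e. `a i + a i.rev = 0` in `Fin n` indexing). -/
theorem statement13 (n : ℕ) (hn : 2 ≤ n) :
    Set.BijOn (lam n) (OmegaSet n)
      {a : Fin n → ℤ | (∀ i j : Fin n, i ≤ j → a i ≤ a j) ∧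
        ∀ i : Fin n, a i + a i.rev = 0} := by
  refine ⟨fun w hw => ?_, fun w hw w' hw' h => ?_,
    fun a ha => exists_mem_OmegaSet_lam_eq hn ha.1 ha.2⟩
  · have hmono := OmegaSet.monotoneOn_seqAt_lam hn hw
    exact ⟨monotoneOn_seqAt_iff.mp hmono, seqAt_reflect_iff.mp fun _ hx =>
      apply_reflect_eq_neg hmono (OmegaSet.countLE_add_countLE_neg hn hw) hx⟩
  · apply DFunLike.coe_injective
    rw [OmegaSet.coe_eq_omegaFun hn hw, OmegaSet.coe_eq_omegaFun hn hw', h]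
end

section
/- Let n ≥ 2 and let w ∈ Ω'_n with λ(w) = (a_1, …, a_n). Then ℓ(w) = Σ_{1 ≤ i < j ≤ n} max(a_j − a_i − 1, 0). -/
open scoped Classical

/-!
An inversion `(x, j)` of `w` (with `1 ≤ j ≤ n`) is uniquely `x = i + m` with `1 ≤ i ≤ n` and
`n ∣ m`, so `ℓ(w) = ∑_{i,j ∈ [1,n]} #{m ∈ nℤ : w j - w i < m < j - i}`. Minimality of `w` in its
right coset forces `w 1 < ⋯ < w n`, and the twisted involution identity `w⁻¹ = τ_n w τ_n` gives
the same for `w⁻¹`. Hence only pairs `j < i` contribute. Writing `w k - 1 = n a_k + r_k` with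
`0 ≤ r_k < n`, such a pair contributes `max (a_i - a_j - 1) 0` if `r_j > r_i` and
`max (a_i - a_j) 0` if `r_j < r_i`; in the latter case `w⁻¹ (r_j + 1) < w⁻¹ (r_i + 1)` reads
`j - n a_j < i - n a_i`, so `a_i ≤ a_j` and both expressions vanish.
-/

namespace AffinePerm

open Finset

variable {n : ℕ} {w : Equiv.Perm ℤ}

noncomputable def multiplesIoo (n : ℕ) (lo hi : ℤ) : Finset ℤ :=
  {m ∈ Ioo lo hi | (n : ℤ) ∣ m}

lemma mem_multiplesIoo {lo hi m : ℤ} :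
    m ∈ multiplesIoo n lo hi ↔ (n : ℤ) ∣ m ∧ lo < m ∧ m < hi := by
  simp [multiplesIoo, and_comm]

lemma multiplesIoo_congr_right {lo hi hi' : ℤ} (hhi : |hi| < n) (hhi' : |hi'| < n)
    (hpos : 0 < hi ↔ 0 < hi') : multiplesIoo n lo hi = multiplesIoo n lo hi' := by
  ext m
  simp only [mem_multiplesIoo, and_congr_right_iff]
  rintro ⟨c, rfl⟩ -
  rw [abs_lt] at hhi hhi'
  rcases lt_trichotomy c 0 with hc | rfl | hc
  · have : (n : ℤ) * c ≤ -n := by nlinarith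
    constructor <;> intro <;> linarith
  · simpa using hpos
  · have : (n : ℤ) ≤ n * c := by nlinarith
    constructor <;> intro <;> linarith

lemma multiplesIoo_eq_empty {lo hi : ℤ} (hlo : 0 ≤ lo) (hhi : hi ≤ n) :
    multiplesIoo n lo hi = ∅ := by
  refine eq_empty_of_forall_notMem fun m hm => ?_
  obtain ⟨⟨c, rfl⟩, hlom, hmhi⟩ := mem_multiplesIoo.mp hm
  have : 0 < c := by by_contra! h; nlinarith
  nlinarith

lemma card_multiplesIoo_of_nonpos (hn : 0 < n) {lo hi : ℤ} (hhi : -n < hi) (hhi' : hi ≤ 0) :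
    #(multiplesIoo n lo hi) = ((-lo - 1) / n).toNat := by
  have hn' : (0 : ℤ) < n := by exact_mod_cast hn
  rw [← sub_zero ((-lo - 1) / n), ← Int.card_Ioc]
  refine card_nbij' (fun m => -(m / n)) (fun k => -(n * k)) ?_ ?_ ?_ ?_
  · intro m hm
    obtain ⟨⟨c, rfl⟩, hlo, hhi⟩ := mem_multiplesIoo.mp hm
    simp only [coe_Ioc, Set.mem_Ioc, Int.mul_ediv_cancel_left _ hn'.ne',
      Int.le_ediv_iff_mul_le hn']
    constructor <;> nlinarith
  · intro k hk
    rw [coe_Ioc, Set.mem_Ioc, Int.le_ediv_iff_mul_le hn'] at hk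
    rw [mem_coe, mem_multiplesIoo]
    refine ⟨(dvd_mul_right _ _).neg_right, by linarith, by nlinarith⟩
  · intro m hm
    obtain ⟨hdvd, -⟩ := mem_multiplesIoo.mp hm
    simp [Int.mul_ediv_cancel' hdvd]
  · intro k _
    simp [← mul_neg, Int.mul_ediv_cancel_left _ hn'.ne']

lemma card_multiplesIoo_one (hn : 2 ≤ n) {lo : ℤ} (hlo : lo < 0) :
    #(multiplesIoo n lo 1) = #(multiplesIoo n lo (-1)) + 1 := by
  have hn' : (2 : ℤ) ≤ n := by exact_mod_cast hn
  have hinsert : multiplesIoo n lo 1 = insert 0 (multiplesIoo n lo 0) := by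
    ext m
    simp only [mem_insert, mem_multiplesIoo]
    constructor
    · rintro ⟨hm, hlom, hm1⟩
      by_cases h0 : m = 0
      · exact .inl h0
      · exact .inr ⟨hm, hlom, by omega⟩
    · rintro (rfl | ⟨hm, hlom, hm0⟩)
      · exact ⟨dvd_zero _, hlo, one_pos⟩
      · exact ⟨hm, hlom, by omega⟩
  rw [hinsert, card_insert_of_notMem (by simp [mem_multiplesIoo]),
    multiplesIoo_congr_right (hi := 0) (hi' := -1) (by simp; omega) (by simp; omega) (by simp)]

lemma apply_add_mul (hw : ∀ i, w (i + n) = w i + n) (i k : ℤ) :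
    w (i + k * n) = w i + k * n := by
  induction k using Int.induction_on generalizing i with
  | zero => simp
  | succ k ih => rw [add_one_mul, ← add_assoc, hw, ih]; ring
  | pred k ih =>
    have h := hw (i + (-k - 1) * n)
    rw [show i + (-k - 1) * n + n = i + -k * n by ring, ih] at h
    linarith

lemma eq_of_mem_Icc_of_dvd_sub {x y : ℤ} (hx : x ∈ Set.Icc 1 (n : ℤ))
    (hy : y ∈ Set.Icc 1 (n : ℤ)) (h : (n : ℤ) ∣ x - y) : x = y := by
  have := Int.eq_zero_of_abs_lt_dvd h <|
    abs_lt.mpr ⟨by linarith [hx.1, hy.2], by linarith [hx.2, hy.1]⟩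
  linarith

lemma ellA_eq_sum_card_multiplesIoo (hn : 0 < n) (hw : ∀ i, w (i + n) = w i + n) :
    ellA n w = ∑ p ∈ Icc (1 : ℤ) n ×ˢ Icc (1 : ℤ) n,
      #(multiplesIoo n (w p.1 - w p.2) (p.1 - p.2)) := by
  have hn' : (0 : ℤ) < n := by exact_mod_cast hn
  set S := (Icc (1 : ℤ) n ×ˢ Icc (1 : ℤ) n).sigma
    fun p => multiplesIoo n (w p.1 - w p.2) (p.1 - p.2)
  let f : (Σ _ : ℤ × ℤ, ℤ) → ℤ × ℤ := fun a => (a.1.2 + a.2, a.1.1)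
  have hinj : Set.InjOn f S := by
    rintro ⟨⟨j, i⟩, m⟩ ha ⟨⟨j', i'⟩, m'⟩ ha' he
    simp only [S, f, coe_sigma, Set.mem_sigma_iff, coe_product, Set.mem_prod, coe_Icc,
      mem_coe, mem_multiplesIoo, Prod.mk.injEq] at ha ha' he
    obtain ⟨⟨-, hi⟩, hm, -⟩ := ha
    obtain ⟨⟨-, hi'⟩, hm', -⟩ := ha'
    have hii' : i = i' := eq_of_mem_Icc_of_dvd_sub hi hi' <| by
      rw [show i - i' = m' - m by linarith]; exact dvd_sub hm' hm
    obtain rfl : j = j' := he.2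
    obtain rfl := hii'
    obtain rfl : m = m' := by linarith
    rfl
  have himage : {p : ℤ × ℤ | p.1 < p.2 ∧ 1 ≤ p.2 ∧ p.2 ≤ n ∧ w p.2 < w p.1} =
      ↑(S.image f) := by
    ext ⟨x, j⟩
    simp only [Set.mem_ofPred_eq, coe_image, Set.mem_image, S, f, coe_sigma, Set.mem_sigma_iff,
      coe_product, Set.mem_prod, coe_Icc, Set.mem_Icc, mem_coe, mem_multiplesIoo, Prod.mk.injEq,
      Sigma.exists]
    constructor
    · rintro ⟨hxj, hj1, hjn, hwx⟩
      have hx : x = ((x - 1) % n + 1) + (x - 1) / n * n := by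
        linarith [Int.emod_add_ediv_mul (x - 1) n]
      have := Int.emod_nonneg (x - 1) hn'.ne'
      have := Int.emod_lt_of_pos (x - 1) hn'
      rw [hx, apply_add_mul hw] at hwx
      refine ⟨(j, (x - 1) % n + 1), (x - 1) / n * n,
        ⟨⟨⟨hj1, hjn⟩, by omega, by omega⟩, dvd_mul_left _ _, by linarith, by linarith⟩,
        hx.symm, rfl⟩
    · rintro ⟨⟨j, i⟩, m, ⟨⟨⟨hj1, hjn⟩, -⟩, ⟨c, rfl⟩, hlo, hhi⟩, rfl, rfl⟩
      dsimp only at hj1 hjn hlo hhi ⊢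
      rw [mul_comm, apply_add_mul hw]
      exact ⟨by linarith, hj1, hjn, by linarith⟩
  rw [ellA, himage, Set.ncard_coe_finset, card_image_of_injOn hinj, card_sigma]

lemma sGen_apply_of_two_le (hn : 2 ≤ n) (i : ℕ) (j : ℤ) : sGen n i j = sFun n i j := by
  have : ¬ (n : ℤ) ∣ 1 := fun h => by have := Int.le_of_dvd one_pos h; omega
  rw [sGen, dif_neg this]
  rfl

lemma sGen_apply_add (i : ℕ) (j : ℤ) : sGen n i (j + n) = sGen n i j + n := by
  by_cases h : (n : ℤ) ∣ 1
  · simp [sGen, h]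
  · rw [sGen, dif_neg h]
    change sFun n i (j + n) = sFun n i j + n
    simp only [sFun, show j + n - i = j - i + n by ring,
      show j + n - (i + 1) = j - (i + 1) + n by ring, dvd_add_self_right]
    split_ifs <;> ring

lemma sGen_apply_of_mem_Icc (hn : 2 ≤ n) {i : ℕ} (hi : i ∈ Set.Icc 1 (n - 1)) {j : ℤ}
    (hj : j ∈ Set.Icc 1 (n : ℤ)) : sGen n i j = Equiv.swap (i : ℤ) (i + 1) j := by
  obtain ⟨hi1, hin⟩ := hi
  have hin' : (i : ℤ) + 1 ≤ n := by omega
  have hdvd {k : ℤ} (hk : k ∈ Set.Icc 1 (n : ℤ)) : (n : ℤ) ∣ j - k ↔ j = k :=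
    ⟨eq_of_mem_Icc_of_dvd_sub hj hk, fun h => by simp [h]⟩
  simp only [sGen_apply_of_two_le hn, sFun, Equiv.swap_apply_def,
    hdvd (k := i) ⟨by omega, by omega⟩, hdvd (k := i + 1) ⟨by omega, hin'⟩]
  split_ifs <;> omega

lemma swap_add_one_lt_swap_add_one_iff {a x y : ℤ} (hxy : (x, y) ≠ (a, a + 1))
    (hyx : (x, y) ≠ (a + 1, a)) :
    Equiv.swap a (a + 1) x < Equiv.swap a (a + 1) y ↔ x < y := by
  simp only [ne_eq, Prod.mk.injEq] at hxy hyx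
  simp only [Equiv.swap_apply_def]
  split_ifs <;> omega

lemma card_multiplesIoo_eq_swap_add_ite (hn : 2 ≤ n) {f : ℤ → ℤ} {a : ℤ}
    (ha : a ∈ Set.Icc 1 ((n : ℤ) - 1)) (hfa : f (a + 1) < f a)
    {x y : ℤ} (hx : x ∈ Set.Icc 1 (n : ℤ)) (hy : y ∈ Set.Icc 1 (n : ℤ)) :
    #(multiplesIoo n (f x - f y) (x - y)) =
      #(multiplesIoo n (f x - f y) (Equiv.swap a (a + 1) x - Equiv.swap a (a + 1) y)) +
        if (x, y) = (a + 1, a) then 1 else 0 := by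
  obtain ⟨ha1, han⟩ := ha
  obtain ⟨hx1, hxn⟩ := hx
  obtain ⟨hy1, hyn⟩ := hy
  by_cases hxy : (x, y) = (a + 1, a)
  · obtain ⟨rfl, rfl⟩ := Prod.mk.inj hxy
    simp [card_multiplesIoo_one hn (sub_neg.mpr hfa)]
  by_cases hyx : (x, y) = (a, a + 1)
  · obtain ⟨rfl, rfl⟩ := Prod.mk.inj hyx
    rw [multiplesIoo_eq_empty (by linarith) (by linarith), Equiv.swap_apply_left,
      Equiv.swap_apply_right, multiplesIoo_eq_empty (by linarith) (by linarith)]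
    simp
  have hτ : ∀ j ∈ Set.Icc 1 (n : ℤ), Equiv.swap a (a + 1) j ∈ Set.Icc 1 (n : ℤ) := by
    rintro j ⟨hj1, hjn⟩
    simp only [Equiv.swap_apply_def, Set.mem_Icc]
    split_ifs <;> omega
  have hτx := hτ x ⟨hx1, hxn⟩
  have hτy := hτ y ⟨hy1, hyn⟩
  rw [if_neg hxy, add_zero]
  congr 1
  refine multiplesIoo_congr_right ?_ ?_ ?_
  · exact abs_lt.mpr ⟨by linarith, by linarith⟩
  · exact abs_lt.mpr ⟨by linarith [hτx.1, hτy.2], by linarith [hτx.2, hτy.1]⟩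
  rw [sub_pos, sub_pos, swap_add_one_lt_swap_add_one_iff]
  · simpa [Prod.ext_iff, and_comm] using hxy
  · simpa [Prod.ext_iff, and_comm] using hyx

lemma ellA_eq_ellA_mul_sGen_add_one (hn : 2 ≤ n) (hw : ∀ j, w (j + n) = w j + n) {i : ℕ}
    (hi : i ∈ Set.Icc 1 (n - 1)) (hlt : w (i + 1) < w i) :
    ellA n w = ellA n (w * sGen n i) + 1 := by
  have hn0 : 0 < n := by omega
  obtain ⟨hi1, hin⟩ := hi
  set τ := Equiv.swap (i : ℤ) (i + 1)
  have hτ : ∀ j, τ j ∈ Icc 1 (n : ℤ) ↔ j ∈ Icc 1 (n : ℤ) := by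
    intro j
    simp only [τ, Equiv.swap_apply_def, mem_Icc]
    split_ifs <;> omega
  have hw' : ∀ j, (w * sGen n i) (j + n) = (w * sGen n i) j + n := by
    simp [sGen_apply_add, hw]
  have hℓ' : ellA n (w * sGen n i) = ∑ p ∈ Icc (1 : ℤ) n ×ˢ Icc (1 : ℤ) n,
      #(multiplesIoo n (w p.1 - w p.2) (τ p.1 - τ p.2)) := by
    rw [ellA_eq_sum_card_multiplesIoo hn0 hw']
    refine sum_equiv (τ.prodCongr τ) (fun p => ?_) (fun p hp => ?_)
    · simp only [mem_product, Equiv.prodCongr_apply, Prod.map_fst, Prod.map_snd, hτ]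
    · obtain ⟨hp1, hp2⟩ := mem_product.mp hp
      simp only [Equiv.Perm.mul_apply, Equiv.prodCongr_apply, Prod.map_fst, Prod.map_snd, τ,
        Equiv.swap_apply_self, sGen_apply_of_mem_Icc hn ⟨hi1, hin⟩ (by simpa using hp1),
        sGen_apply_of_mem_Icc hn ⟨hi1, hin⟩ (by simpa using hp2)]
  have hmem : ((i : ℤ) + 1, (i : ℤ)) ∈ Icc (1 : ℤ) n ×ˢ Icc (1 : ℤ) n := by
    simp only [mem_product, mem_Icc]; omega
  rw [ellA_eq_sum_card_multiplesIoo hn0 hw, hℓ', sum_congr rfl fun p hp =>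
    card_multiplesIoo_eq_swap_add_ite hn ⟨by omega, by omega⟩ hlt
      (by simpa using (mem_product.mp hp).1) (by simpa using (mem_product.mp hp).2),
    sum_add_distrib, sum_ite_eq', if_pos hmem]

lemma strictMonoOn_Icc_of_ellA_mul_sGen (hn : 2 ≤ n) (hw : ∀ j, w (j + n) = w j + n)
    (hmin : ∀ i : ℕ, 1 ≤ i → i ≤ n - 1 → ellA n (w * sGen n i) = ellA n w + 1) :
    StrictMonoOn w (Set.Icc 1 (n : ℤ)) := by
  refine strictMonoOn_of_lt_add_one Set.ordConnected_Icc fun a _ ha ha' => ?_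
  lift a to ℕ using by linarith [ha.1]
  have hi : a ∈ Set.Icc 1 (n - 1) := ⟨by exact_mod_cast ha.1, by have := ha'.2; omega⟩
  by_contra! hle
  have hlt : w (a + 1) < w a := hle.lt_of_ne (w.injective.ne (by omega))
  have := ellA_eq_ellA_mul_sGen_add_one hn hw hi hlt
  have := hmin a hi.1 hi.2
  omega

lemma symm_apply_eq_of_twisted (h : tauN n * w * (tauN n * w) = 1) (j : ℤ) :
    w.symm j = n + 1 - w (n + 1 - j) := by
  rw [Equiv.symm_apply_eq]
  have := congr($h (n + 1 - j))
  simp only [tauN, Equiv.Perm.mul_apply, Equiv.coe_fn_mk, Equiv.Perm.one_apply] at this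
  linarith

lemma strictMonoOn_symm_of_twisted (h : tauN n * w * (tauN n * w) = 1)
    (hmono : StrictMonoOn w (Set.Icc 1 (n : ℤ))) : StrictMonoOn w.symm (Set.Icc 1 (n : ℤ)) := by
  rintro x ⟨hx1, hxn⟩ y ⟨hy1, hyn⟩ hxy
  rw [symm_apply_eq_of_twisted h, symm_apply_eq_of_twisted h, sub_lt_sub_iff_left]
  exact hmono ⟨by linarith, by linarith⟩ ⟨by linarith, by linarith⟩ (by linarith)

lemma card_multiplesIoo_eq_max (hn : 0 < n) (hw : ∀ j, w (j + n) = w j + n)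
    (hmono' : StrictMonoOn w.symm (Set.Icc 1 (n : ℤ))) {p q : ℤ}
    (hp : p ∈ Set.Icc 1 (n : ℤ)) (hq : q ∈ Set.Icc 1 (n : ℤ)) (hpq : p < q) :
    (#(multiplesIoo n (w p - w q) (p - q)) : ℤ) = max ((w q - 1) / n - (w p - 1) / n - 1) 0 := by
  have hn' : (0 : ℤ) < n := by exact_mod_cast hn
  have hsymm (x : ℤ) : w.symm ((w x - 1) % n + 1) = x + -((w x - 1) / n) * n := by
    rw [Equiv.symm_apply_eq, apply_add_mul hw]
    linarith [Int.emod_add_ediv_mul (w x - 1) n]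
  have hp' := Int.emod_add_ediv_mul (w p - 1) n
  have hq' := Int.emod_add_ediv_mul (w q - 1) n
  have hsymmp := hsymm p
  have hsymmq := hsymm q
  have hrp0 := Int.emod_nonneg (w p - 1) hn'.ne'
  have hrq0 := Int.emod_nonneg (w q - 1) hn'.ne'
  have hrpn := Int.emod_lt_of_pos (w p - 1) hn'
  have hrqn := Int.emod_lt_of_pos (w q - 1) hn'
  generalize (w p - 1) % n = rp, (w q - 1) % n = rq, (w p - 1) / n = Ap, (w q - 1) / n = Aq
    at hp' hq' hsymmp hsymmq hrp0 hrq0 hrpn hrqn ⊢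
  obtain ⟨hp1, hpn⟩ := hp
  obtain ⟨hq1, hqn⟩ := hq
  rw [card_multiplesIoo_of_nonpos hn (by linarith) (by linarith), Int.toNat_eq_max]
  rcases lt_trichotomy rp rq with h | rfl | h
  · have hA : Aq ≤ Ap := by
      have := hmono' ⟨by linarith, by linarith⟩ ⟨by linarith, by linarith⟩
        (show rp + 1 < rq + 1 by linarith)
      rw [hsymmp, hsymmq] at this
      by_contra! hc
      nlinarith
    rw [((Int.ediv_emod_unique (r := rq - rp - 1) (q := Aq - Ap) hn').mpr
      ⟨by linarith, by linarith, by linarith⟩).1]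
    omega
  · have hdvd : (n : ℤ) ∣ p - q := ⟨Ap - Aq, by linarith [hsymmp.symm.trans hsymmq]⟩
    exact absurd (eq_of_mem_Icc_of_dvd_sub ⟨hp1, hpn⟩ ⟨hq1, hqn⟩ hdvd) hpq.ne
  · rw [((Int.ediv_emod_unique (r := rq - rp - 1 + n) (q := Aq - Ap - 1) hn').mpr
      ⟨by linarith, by linarith, by linarith⟩).1]

lemma sum_Icc_prod_Icc_eq_sum_fin {M : Type*} [AddCommMonoid M] (n : ℕ) (f : ℤ × ℤ → M) :
    ∑ p ∈ Icc (1 : ℤ) n ×ˢ Icc (1 : ℤ) n, f p =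
      ∑ a : Fin n × Fin n, f (((a.1 : ℕ) : ℤ) + 1, ((a.2 : ℕ) : ℤ) + 1) := by
  have himage : Icc (1 : ℤ) n = univ.image fun i : Fin n => ((i : ℕ) : ℤ) + 1 := by
    ext x
    simp only [mem_Icc, mem_image, mem_univ, true_and]
    refine ⟨fun hx => ⟨⟨(x - 1).toNat, by omega⟩, by simp; omega⟩, ?_⟩
    rintro ⟨i, rfl⟩
    omega
  have hinj : Set.InjOn (fun i : Fin n => ((i : ℕ) : ℤ) + 1) ↑(univ : Finset (Fin n)) :=
    fun i _ j _ h => by simpa [Fin.ext_iff] using h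
  rw [sum_product, himage, sum_image hinj, Fintype.sum_prod_type]
  simp only [sum_image hinj]

end AffinePerm

open AffinePerm

/-- Let `n ≥ 2` and `w ∈ Ω'_n` with `λ(w) = (a_1, …, a_n)`. Then
`ℓ(w) = ∑_{1 ≤ i < j ≤ n} max(a_j − a_i − 1, 0)`. -/
theorem statement14 (n : ℕ) (hn : 2 ≤ n) (w : Equiv.Perm ℤ) (hw : w ∈ Omega'Set n) :
    (ellA n w : ℤ) =
      ∑ p ∈ Finset.univ.filter (fun p : Fin n × Fin n => p.1 < p.2),
        max (lam n w p.2 - lam n w p.1 - 1) 0 := by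
  obtain ⟨⟨hper, -⟩, htwist, hmin⟩ := hw
  have hn0 : 0 < n := by omega
  have hmono := strictMonoOn_Icc_of_ellA_mul_sGen hn hper fun i h1 h2 => (hmin i h1 h2).2
  have hmono' := strictMonoOn_symm_of_twisted htwist hmono
  have hmem (i : Fin n) : ((i : ℕ) : ℤ) + 1 ∈ Set.Icc 1 (n : ℤ) := ⟨by omega, by omega⟩
  rw [ellA_eq_sum_card_multiplesIoo hn0 hper, sum_Icc_prod_Icc_eq_sum_fin, Finset.sum_filter]
  push_cast
  refine Finset.sum_congr rfl fun a _ => ?_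
  split_ifs with h
  · rw [card_multiplesIoo_eq_max hn0 hper hmono' (hmem _) (hmem _) (by simpa using h), lam, lam,
      Int.fdiv_eq_ediv_of_nonneg _ (by positivity), Int.fdiv_eq_ediv_of_nonneg _ (by positivity)]
  · have hle := hmono.monotoneOn (hmem a.2) (hmem a.1) (by simpa using h)
    rw [multiplesIoo_eq_empty (sub_nonneg.mpr hle) (by omega)]
    simp
end
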